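/- arXiv:math/0006034 — 2 statements merged into one kernel-verified Lean document; each statement's English description precedes it below -/
import Mathlib

section
/- Let 1 ≤ p < q < ∞ and define 1 < r < ∞ by 1/r = 1/p − 1/q, and let E be a Banach sequence space with ℓ_p ⊆ E and ‖e_n‖_E = 1 for all n. Then every (E,p)-summing operator T: X → Y between Banach spaces is (M(ℓ_r,E),q)-summing, and π_{M(ℓ_r,E),q}(T) ≤ c_p^E·(c_q^{M(ℓ_r,E)})^{-1}·π_{E,p}(T). -/
open scoped BigOperators ZeroAtInfty

noncomputable section

namespace Paper

/-- The standard unit vector sequences. -/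
def e (n : ℕ) : ℕ → ℝ := fun m => if m = n then 1 else 0

/-- Membership in `ℓ_p` for `1 ≤ p < ∞`. -/
def Memlp (p : ℝ) (x : ℕ → ℝ) : Prop := Summable fun n => |x n| ^ p

/-- The `ℓ_p`-norm for `1 ≤ p < ∞`. -/
def lpNorm (p : ℝ) (x : ℕ → ℝ) : ℝ := (∑' n, |x n| ^ p) ^ (1 / p)

/-- Membership in `c₀`. -/
def MemC0 (x : ℕ → ℝ) : Prop := Filter.Tendsto x Filter.atTop (nhds 0)

/-- Membership in `ℓ_∞`. -/
def MemLinf (x : ℕ → ℝ) : Prop := ∃ C : ℝ, ∀ n, |x n| ≤ C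

/-- The sup norm. -/
def linfNorm (x : ℕ → ℝ) : ℝ := ⨆ n, |x n|

/-- The decreasing rearrangement of `(|x n|)` (0-indexed: `decr x n` is the (n+1)-st value). -/
def decr (x : ℕ → ℝ) (n : ℕ) : ℝ :=
  sInf {a : ℝ | ∃ J : Finset ℕ, J.card ≤ n ∧ ∀ i ∉ J, |x i| ≤ a}

/-- A (real) Banach sequence space: a Banach space of real sequences which is an ideal
with respect to the coordinatewise order and contains a sequence with full support.
Membership in the space is described by the predicate `mem` and the norm by `nrm`. -/
structure SeqSpace where
  mem : (ℕ → ℝ) → Prop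
  nrm : (ℕ → ℝ) → ℝ
  zero_mem : mem 0
  add_mem : ∀ {x y}, mem x → mem y → mem (x + y)
  smul_mem : ∀ (c : ℝ) {x}, mem x → mem (c • x)
  nrm_nonneg : ∀ x, 0 ≤ nrm x
  nrm_eq_zero : ∀ x, mem x → nrm x = 0 → x = 0
  nrm_smul : ∀ (c : ℝ) (x), mem x → nrm (c • x) = |c| * nrm x
  nrm_triangle : ∀ x y, mem x → mem y → nrm (x + y) ≤ nrm x + nrm y
  ideal : ∀ x y, mem y → (∀ n, |x n| ≤ |y n|) → mem x ∧ nrm x ≤ nrm y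
  exists_full : ∃ x, mem x ∧ ∀ n, x n ≠ 0
  complete : ∀ f : ℕ → (ℕ → ℝ), (∀ k, mem (f k)) →
    (∀ ε : ℝ, 0 < ε → ∃ N, ∀ m ≥ N, ∀ n ≥ N, nrm (f m - f n) < ε) →
    ∃ g, mem g ∧ ∀ ε : ℝ, 0 < ε → ∃ N, ∀ n ≥ N, nrm (f n - g) < ε

/-- A sequence space is symmetric if the norm is invariant under passing to the
decreasing rearrangement. -/
def SeqSpace.IsSymmetric (E : SeqSpace) : Prop :=
  ∀ x, E.mem x → E.mem (decr x) ∧ E.nrm (decr x) = E.nrm x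

/-- A sequence space is maximal if its closed unit ball is closed under pointwise
convergence. -/
def SeqSpace.IsMaximal (E : SeqSpace) : Prop :=
  ∀ f : ℕ → (ℕ → ℝ), (∀ k, E.mem (f k) ∧ E.nrm (f k) ≤ 1) →
    ∀ g : ℕ → ℝ, (∀ n, Filter.Tendsto (fun k => f k n) Filter.atTop (nhds (g n))) →
      E.mem g ∧ E.nrm g ≤ 1

/-- All standard unit vectors belong to `E` and have norm one. -/
def SeqSpace.UnitVectors (E : SeqSpace) : Prop := ∀ n, E.mem (e n) ∧ E.nrm (e n) = 1

/-- 2-concavity of a sequence space given by a membership predicate and a norm. -/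
def TwoConcaveOn (mem : (ℕ → ℝ) → Prop) (nrm : (ℕ → ℝ) → ℝ) : Prop :=
  ∃ C > 0, ∀ (m : ℕ) (x : Fin m → ℕ → ℝ), (∀ i, mem (x i)) →
    (∑ i, nrm (x i) ^ 2) ^ ((1 : ℝ) / 2) ≤
      C * nrm (fun n => (∑ i, (x i n) ^ 2) ^ ((1 : ℝ) / 2))

/-- 2-convexity of a sequence space given by a membership predicate and a norm. -/
def TwoConvexOn (mem : (ℕ → ℝ) → Prop) (nrm : (ℕ → ℝ) → ℝ) : Prop :=
  ∃ C > 0, ∀ (m : ℕ) (x : Fin m → ℕ → ℝ), (∀ i, mem (x i)) →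
    nrm (fun n => (∑ i, (x i n) ^ 2) ^ ((1 : ℝ) / 2)) ≤
      C * (∑ i, nrm (x i) ^ 2) ^ ((1 : ℝ) / 2)

def SeqSpace.TwoConcave (E : SeqSpace) : Prop := TwoConcaveOn E.mem E.nrm

def SeqSpace.TwoConvex (E : SeqSpace) : Prop := TwoConvexOn E.mem E.nrm

/-- The indicator sequence of `{0, …, n-1}`, i.e. `∑_{i=1}^n e_i`. -/
def indicator (n : ℕ) : ℕ → ℝ := fun m => if m < n then 1 else 0

/-- The fundamental function `λ_E(n) = ‖∑_{i=1}^n e_i‖_E`. -/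
def fundFn (E : SeqSpace) (n : ℕ) : ℝ := E.nrm (indicator n)

/-- The norm `c_p^E = ‖id : ℓ_p → E‖` of the inclusion of `ℓ_p` into the sequence
space with norm `ν`. -/
def cPN (ν : (ℕ → ℝ) → ℝ) (p : ℝ) : ℝ :=
  sSup {c | ∃ x, Memlp p x ∧ lpNorm p x ≤ 1 ∧ c = ν x}

section Operators

variable {X Y Z : Type*} [NormedAddCommGroup X] [NormedSpace ℝ X]
  [NormedAddCommGroup Y] [NormedSpace ℝ Y] [NormedAddCommGroup Z] [NormedSpace ℝ Z]

/-- The weak `ℓ_p`-norm `sup_{‖x'‖ ≤ 1} (∑ |⟨x', x_i⟩|^p)^{1/p}` of a finite family. -/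
def weakNorm (p : ℝ) {m : ℕ} (x : Fin m → X) : ℝ :=
  sSup {c | ∃ φ : X →L[ℝ] ℝ, ‖φ‖ ≤ 1 ∧ c = (∑ i, |φ (x i)| ^ p) ^ (1 / p)}

/-- `T` is `(E,p)`-summing with constant `C`, where `E` is the sequence space with norm `ν`. -/
def SummingWith (ν : (ℕ → ℝ) → ℝ) (p : ℝ) (T : X →L[ℝ] Y) (C : ℝ) : Prop :=
  ∀ (m : ℕ) (x : Fin m → X),
    ν (fun n => if h : n < m then ‖T (x ⟨n, h⟩)‖ else 0) ≤ C * cPN ν p * weakNorm p x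

/-- `T` is `(E,p)`-summing, where `E` is the sequence space with norm `ν`. -/
def Summing (ν : (ℕ → ℝ) → ℝ) (p : ℝ) (T : X →L[ℝ] Y) : Prop :=
  ∃ C, 0 ≤ C ∧ SummingWith ν p T C

/-- The `(E,p)`-summing norm `π_{E,p}(T)`, where `E` is the sequence space with norm `ν`. -/
def piN (ν : (ℕ → ℝ) → ℝ) (p : ℝ) (T : X →L[ℝ] Y) : ℝ :=
  sInf {C | 0 ≤ C ∧ SummingWith ν p T C}

/-- The `k`-th approximation number (1-based). -/
def approxNum (T : X →L[ℝ] Y) (k : ℕ) : ℝ :=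
  sInf {c | ∃ S : X →L[ℝ] Y,
    Module.rank ℝ ↥(LinearMap.range (S : X →ₗ[ℝ] Y)) < (k : Cardinal) ∧ c = ‖T - S‖}

/-- The `k`-th Weyl number (1-based). -/
def weylNum (T : X →L[ℝ] Y) (k : ℕ) : ℝ :=
  sSup {c | ∃ S : lp (fun _ : ℕ => ℝ) 2 →L[ℝ] X, ‖S‖ ≤ 1 ∧ c = approxNum (T.comp S) k}

/-- The `k`-th Gelfand number (1-based). -/
def gelfandNum (T : X →L[ℝ] Y) (k : ℕ) : ℝ :=
  sInf {c | ∃ G : Submodule ℝ X, Module.rank ℝ (X ⧸ G) < (k : Cardinal) ∧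
    c = sSup {d | ∃ x ∈ G, ‖x‖ ≤ 1 ∧ d = ‖T x‖}}

end Operators

/-- Membership in the space of multipliers `M(E,F)`. -/
def mulMem (memE : (ℕ → ℝ) → Prop) (memF : (ℕ → ℝ) → Prop) (lam : ℕ → ℝ) : Prop :=
  ∀ y, memE y → memF (fun n => lam n * y n)

/-- The norm of the space of multipliers `M(E,F)`. -/
def mulNorm (memE : (ℕ → ℝ) → Prop) (nrmE : (ℕ → ℝ) → ℝ) (nrmF : (ℕ → ℝ) → ℝ)
    (lam : ℕ → ℝ) : ℝ :=
  sSup {c | ∃ y, memE y ∧ nrmE y ≤ 1 ∧ c = nrmF (fun n => lam n * y n)}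

/-- Membership in `M(ℓ₂, E)`. -/
def m2Mem (E : SeqSpace) : (ℕ → ℝ) → Prop := mulMem (Memlp 2) E.mem

/-- The norm of `M(ℓ₂, E)`. -/
def m2Norm (E : SeqSpace) : (ℕ → ℝ) → ℝ := mulNorm (Memlp 2) (lpNorm 2) E.nrm

/-- The dual norm of a linear functional with respect to the sequence space with
membership `memE` and norm `νE`. -/
def dualNormSeq (memE : (ℕ → ℝ) → Prop) (νE : (ℕ → ℝ) → ℝ) (φ : (ℕ → ℝ) →ₗ[ℝ] ℝ) : ℝ :=
  sSup {c | ∃ x, memE x ∧ νE x ≤ 1 ∧ c = |φ x|}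

/-- The weak `ℓ_p`-norm of a finite family in the sequence space `(memE, νE)`. -/
def weakNormSeq (p : ℝ) (memE : (ℕ → ℝ) → Prop) (νE : (ℕ → ℝ) → ℝ) {m : ℕ}
    (x : Fin m → ℕ → ℝ) : ℝ :=
  sSup {c | ∃ φ : (ℕ → ℝ) →ₗ[ℝ] ℝ, dualNormSeq memE νE φ ≤ 1 ∧
    c = (∑ i, |φ (x i)| ^ p) ^ (1 / p)}

/-- The inclusion map from the sequence space `(memE, νE)` into the sequence space with
norm `μ` is `(F,p)`-summing with constant `C`, where `F` has norm `νF`. -/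
def InclSummingWith (νF : (ℕ → ℝ) → ℝ) (p : ℝ) (memE : (ℕ → ℝ) → Prop)
    (νE : (ℕ → ℝ) → ℝ) (μ : (ℕ → ℝ) → ℝ) (C : ℝ) : Prop :=
  ∀ (m : ℕ) (x : Fin m → ℕ → ℝ), (∀ i, memE (x i)) →
    νF (fun n => if h : n < m then μ (x ⟨n, h⟩) else 0) ≤
      C * cPN νF p * weakNormSeq p memE νE x

/-- The inclusion map from the sequence space `(memE, νE)` into the sequence space with
norm `μ` is `(F,p)`-summing, where `F` has norm `νF`. -/
def InclSumming (νF : (ℕ → ℝ) → ℝ) (p : ℝ) (memE : (ℕ → ℝ) → Prop)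
    (νE : (ℕ → ℝ) → ℝ) (μ : (ℕ → ℝ) → ℝ) : Prop :=
  ∃ C, 0 ≤ C ∧ InclSummingWith νF p memE νE μ C

/-- Extension of a finite sequence by zeros. -/
def ext {n : ℕ} (x : Fin n → ℝ) : ℕ → ℝ := fun m => if h : m < n then x ⟨m, h⟩ else 0

/-- The norm of the finite section `E_n` of a sequence space `E`. -/
def finNrm (E : SeqSpace) (n : ℕ) (x : Fin n → ℝ) : ℝ := E.nrm (ext x)

/-- The euclidean norm on `ℝ^n`, i.e. the norm of `ℓ₂^n`. -/
def l2Fin {n : ℕ} (x : Fin n → ℝ) : ℝ := (∑ i, (x i) ^ 2) ^ ((1 : ℝ) / 2)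

/-- The operator norm of a linear map between finite-dimensional sequence spaces with
norms `ν` and `μ`. -/
def opNormFin {n m : ℕ} (ν : (Fin n → ℝ) → ℝ) (μ : (Fin m → ℝ) → ℝ)
    (T : (Fin n → ℝ) →ₗ[ℝ] (Fin m → ℝ)) : ℝ :=
  sSup {c | ∃ x, ν x ≤ 1 ∧ c = μ (T x)}

/-- The `k`-th approximation number (1-based) of a linear map between finite-dimensional
sequence spaces with norms `ν` and `μ`. -/
def approxFin {n m : ℕ} (ν : (Fin n → ℝ) → ℝ) (μ : (Fin m → ℝ) → ℝ)
    (T : (Fin n → ℝ) →ₗ[ℝ] (Fin m → ℝ)) (k : ℕ) : ℝ :=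
  sInf {c | ∃ S : (Fin n → ℝ) →ₗ[ℝ] (Fin m → ℝ),
    Module.rank ℝ ↥(LinearMap.range S) < (k : Cardinal) ∧ c = opNormFin ν μ (T - S)}

/-- Dual norm on functionals of a finite-dimensional sequence space with norm `ν`. -/
def dualNormFin {n : ℕ} (ν : (Fin n → ℝ) → ℝ) (φ : (Fin n → ℝ) →ₗ[ℝ] ℝ) : ℝ :=
  sSup {c | ∃ x, ν x ≤ 1 ∧ c = |φ x|}

/-- The weak `ℓ_p`-norm of a finite family in a finite-dimensional sequence space. -/
def weakNormFin (p : ℝ) {n : ℕ} (ν : (Fin n → ℝ) → ℝ) {m : ℕ} (x : Fin m → Fin n → ℝ) : ℝ :=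
  sSup {c | ∃ φ : (Fin n → ℝ) →ₗ[ℝ] ℝ, dualNormFin ν φ ≤ 1 ∧
    c = (∑ i, |φ (x i)| ^ p) ^ (1 / p)}

/-- `(F,p)`-summing property, with constant `C`, for a linear map between
finite-dimensional sequence spaces with norms `ν` and `μ`. -/
def SummingFinWith (νF : (ℕ → ℝ) → ℝ) (p : ℝ) {n m' : ℕ} (ν : (Fin n → ℝ) → ℝ)
    (μ : (Fin m' → ℝ) → ℝ) (T : (Fin n → ℝ) →ₗ[ℝ] (Fin m' → ℝ)) (C : ℝ) : Prop :=
  ∀ (m : ℕ) (x : Fin m → Fin n → ℝ),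
    νF (fun j => if h : j < m then μ (T (x ⟨j, h⟩)) else 0) ≤
      C * cPN νF p * weakNormFin p ν x

/-- The `(F,p)`-summing norm of a linear map between finite-dimensional sequence spaces. -/
def piNFin (νF : (ℕ → ℝ) → ℝ) (p : ℝ) {n m' : ℕ} (ν : (Fin n → ℝ) → ℝ)
    (μ : (Fin m' → ℝ) → ℝ) (T : (Fin n → ℝ) →ₗ[ℝ] (Fin m' → ℝ)) : ℝ :=
  sInf {C | 0 ≤ C ∧ SummingFinWith νF p ν μ T C}

/-- `T` maps the sequence space `(memA, νA)` boundedly into the sequence space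
`(memB, νB)`. -/
def BddBetween (memA : (ℕ → ℝ) → Prop) (νA : (ℕ → ℝ) → ℝ) (memB : (ℕ → ℝ) → Prop)
    (νB : (ℕ → ℝ) → ℝ) (T : (ℕ → ℝ) →ₗ[ℝ] (ℕ → ℝ)) : Prop :=
  (∀ x, memA x → memB (T x)) ∧ ∃ C, 0 ≤ C ∧ ∀ x, memA x → νB (T x) ≤ C * νA x

/-- Membership in the sum space `X₀ + X₁`. -/
def memSum (m₀ m₁ : (ℕ → ℝ) → Prop) (x : ℕ → ℝ) : Prop := ∃ a b, m₀ a ∧ m₁ b ∧ x = a + b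

/-- Membership in the intersection `X₀ ∩ X₁`. -/
def memInter (m₀ m₁ : (ℕ → ℝ) → Prop) (x : ℕ → ℝ) : Prop := m₀ x ∧ m₁ x

/-- The Peetre K-functional of the couple `((m₀,ν₀), (m₁,ν₁))`. -/
def Kfn (m₀ : (ℕ → ℝ) → Prop) (ν₀ : (ℕ → ℝ) → ℝ) (m₁ : (ℕ → ℝ) → Prop)
    (ν₁ : (ℕ → ℝ) → ℝ) (t : ℝ) (x : ℕ → ℝ) : ℝ :=
  sInf {c | ∃ a b, m₀ a ∧ m₁ b ∧ x = a + b ∧ c = ν₀ a + t * ν₁ b}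

/-- The norm of the sum space `X₀ + X₁`. -/
def sumNrm (m₀ : (ℕ → ℝ) → Prop) (ν₀ : (ℕ → ℝ) → ℝ) (m₁ : (ℕ → ℝ) → Prop)
    (ν₁ : (ℕ → ℝ) → ℝ) (x : ℕ → ℝ) : ℝ := Kfn m₀ ν₀ m₁ ν₁ 1 x

/-- The norm of the intersection `X₀ ∩ X₁`. -/
def interNrm (ν₀ ν₁ : (ℕ → ℝ) → ℝ) (x : ℕ → ℝ) : ℝ := max (ν₀ x) (ν₁ x)

/-- `(mX, νX)` is an interpolation space with respect to the couple
`((m₀,ν₀), (m₁,ν₁))`: it is intermediate and every operator bounded on both spaces of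
the couple is bounded on it. -/
def IsInterpSpace (m₀ : (ℕ → ℝ) → Prop) (ν₀ : (ℕ → ℝ) → ℝ) (m₁ : (ℕ → ℝ) → Prop)
    (ν₁ : (ℕ → ℝ) → ℝ) (mX : (ℕ → ℝ) → Prop) (νX : (ℕ → ℝ) → ℝ) : Prop :=
  BddBetween (memInter m₀ m₁) (interNrm ν₀ ν₁) mX νX LinearMap.id ∧
  BddBetween mX νX (memSum m₀ m₁) (sumNrm m₀ ν₀ m₁ ν₁) LinearMap.id ∧
  ∀ T : (ℕ → ℝ) →ₗ[ℝ] (ℕ → ℝ),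
    BddBetween m₀ ν₀ m₀ ν₀ T → BddBetween m₁ ν₁ m₁ ν₁ T → BddBetween mX νX mX νX T

/-- `((m₀,ν₀), (m₁,ν₁))` is a relative Calderón couple. -/
def CalderonCouple (m₀ : (ℕ → ℝ) → Prop) (ν₀ : (ℕ → ℝ) → ℝ) (m₁ : (ℕ → ℝ) → Prop)
    (ν₁ : (ℕ → ℝ) → ℝ) : Prop :=
  ∀ x y, memSum m₀ m₁ x → memSum m₀ m₁ y →
    (∀ t : ℝ, 0 < t → Kfn m₀ ν₀ m₁ ν₁ t y ≤ Kfn m₀ ν₀ m₁ ν₁ t x) →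
    ∃ T : (ℕ → ℝ) →ₗ[ℝ] (ℕ → ℝ),
      BddBetween m₀ ν₀ m₀ ν₀ T ∧ BddBetween m₁ ν₁ m₁ ν₁ T ∧ T x = y

/-- Membership in the `p`-th power `E^p` of a sequence space. -/
def powMem (memE : (ℕ → ℝ) → Prop) (p : ℝ) (x : ℕ → ℝ) : Prop :=
  memE fun n => |x n| ^ (1 / p)

/-- The norm of the `p`-th power `E^p` of a sequence space. -/
def powNrm (νE : (ℕ → ℝ) → ℝ) (p : ℝ) (x : ℕ → ℝ) : ℝ :=
  νE (fun n => |x n| ^ (1 / p)) ^ p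

/-- The `i`-th Rademacher function (1-based: this is `r_{i+1}`). -/
def rademacher (i : ℕ) (t : ℝ) : ℝ := (-1 : ℝ) ^ ⌊t * 2 ^ (i + 1)⌋

/-- A Banach space has cotype 2. -/
def CotypeTwo (X : Type*) [NormedAddCommGroup X] [NormedSpace ℝ X] : Prop :=
  ∃ C > 0, ∀ (n : ℕ) (x : Fin n → X),
    (∑ i, ‖x i‖ ^ 2) ^ ((1 : ℝ) / 2) ≤
      C * (∫ t in (0:ℝ)..1, ‖∑ i, rademacher i.val t • x i‖ ^ 2) ^ ((1 : ℝ) / 2)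

/-- A sequence space has cotype 2. -/
def SeqCotypeTwo (E : SeqSpace) : Prop :=
  ∃ C > 0, ∀ (n : ℕ) (x : Fin n → ℕ → ℝ), (∀ i, E.mem (x i)) →
    (∑ i, E.nrm (x i) ^ 2) ^ ((1 : ℝ) / 2) ≤
      C * (∫ t in (0:ℝ)..1, E.nrm (∑ i, rademacher i.val t • x i) ^ 2) ^ ((1 : ℝ) / 2)

/-- The inclusion of the sequence space `(memE, νE)` into the sequence space with norm
`μ` is strictly singular: there is no infinite-dimensional closed subspace on which the
inclusion is an isomorphism onto its image. -/
def InclStrictlySingular (memE : (ℕ → ℝ) → Prop) (νE : (ℕ → ℝ) → ℝ)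
    (μ : (ℕ → ℝ) → ℝ) : Prop :=
  ¬ ∃ Z : Submodule ℝ (ℕ → ℝ),
      (∀ x ∈ Z, memE x) ∧
      (¬ Module.Finite ℝ ↥Z) ∧
      (∀ f : ℕ → (ℕ → ℝ), (∀ k, f k ∈ Z) → ∀ g, memE g →
        (∀ ε : ℝ, 0 < ε → ∃ N, ∀ k ≥ N, νE (f k - g) < ε) → g ∈ Z) ∧
      ∃ c > 0, ∀ x ∈ Z, c * νE x ≤ μ x

/-- `E` coincides with `ℓ₂` up to an equivalent norm. -/
def EquivToL2 (E : SeqSpace) : Prop :=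
  (∀ x, E.mem x ↔ Memlp 2 x) ∧
  ∃ c > 0, ∃ C > 0, ∀ x, E.mem x → c * lpNorm 2 x ≤ E.nrm x ∧ E.nrm x ≤ C * lpNorm 2 x

/-- Convergence in the norm of the sequence space `E`. -/
def TendstoInNrm (E : SeqSpace) (s : ℕ → (ℕ → ℝ)) (g : ℕ → ℝ) : Prop :=
  ∀ ε : ℝ, 0 < ε → ∃ N, ∀ k ≥ N, E.nrm (s k - g) < ε

/-- The sequence `(x k)` of elements of `E` is unconditionally summable in `E`. -/
def UncondSummable (E : SeqSpace) (x : ℕ → (ℕ → ℝ)) : Prop :=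
  ∀ σ : Equiv.Perm ℕ, ∃ s, E.mem s ∧
    TendstoInNrm E (fun m => ∑ k ∈ Finset.range m, x (σ k)) s

/-- Membership in the Lorentz sequence space `ℓ_{p,q}`, `q < ∞`. -/
def memLorentz (p q : ℝ) (x : ℕ → ℝ) : Prop :=
  Summable fun n : ℕ => ((n : ℝ) + 1) ^ (q / p - 1) * decr x n ^ q

/-- The norm of the Lorentz sequence space `ℓ_{p,q}`, `q < ∞`. -/
def lorentzNorm (p q : ℝ) (x : ℕ → ℝ) : ℝ :=
  (∑' n : ℕ, ((n : ℝ) + 1) ^ (q / p - 1) * decr x n ^ q) ^ (1 / q)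

/-- Membership in the Lorentz sequence space `ℓ_{p,∞}`. -/
def memLorentzInf (p : ℝ) (x : ℕ → ℝ) : Prop :=
  ∃ C : ℝ, ∀ n : ℕ, ((n : ℝ) + 1) ^ (1 / p) * decr x n ≤ C

/-- The norm of the Lorentz sequence space `ℓ_{p,∞}`. -/
def lorentzInfNorm (p : ℝ) (x : ℕ → ℝ) : ℝ :=
  ⨆ n : ℕ, ((n : ℝ) + 1) ^ (1 / p) * decr x n

/-- The real sequence space `ℓ₂`. -/
abbrev L2 := lp (fun _ : ℕ => ℝ) 2

/-- The canonical complex structure on `ℓ₂ × ℓ₂`, `J(x,y) = (-y,x)`. -/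
def Jop : (L2 × L2) →L[ℝ] (L2 × L2) :=
  (-(ContinuousLinearMap.snd ℝ L2 L2)).prod (ContinuousLinearMap.fst ℝ L2 L2)

/-- The real operator on `ℓ₂ × ℓ₂` corresponding to `T_ℂ - μ` on the complexification
of `ℓ₂`, where `T_ℂ` is the complexification of `T`. -/
def complexBlock (T : L2 →L[ℝ] L2) (μ : ℂ) : (L2 × L2) →ₗ[ℝ] (L2 × L2) :=
  ((T.prodMap T) - μ.re • ContinuousLinearMap.id ℝ (L2 × L2) - μ.im • Jop).toLinearMap

/-- The algebraic multiplicity of `μ ≠ 0` as an eigenvalue of the complexification of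
`T`: half the real dimension of the generalized eigenspace of the corresponding real
operator on `ℓ₂ × ℓ₂`. -/
def genMult (T : L2 →L[ℝ] L2) (μ : ℂ) : ℕ :=
  Module.finrank ℝ ↥(⨆ k : ℕ, LinearMap.ker (complexBlock T μ ^ k)) / 2

/-- `lam` is an eigenvalue sequence of `T`: the moduli are non-increasing and every
nonzero `μ` occurs in `lam` exactly according to its algebraic multiplicity as an
eigenvalue of the complexification of `T`. -/
def IsEigenvalueSeq (T : L2 →L[ℝ] L2) (lam : ℕ → ℂ) : Prop :=
  Antitone (fun n => ‖lam n‖) ∧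
  ∀ μ : ℂ, μ ≠ 0 → Nat.card {n | lam n = μ} = genMult T μ


lemma nrm_zero' (E : SeqSpace) : E.nrm 0 = 0 := by
  have h := E.nrm_smul 0 0 E.zero_mem
  simpa using h

lemma memlp_fin {s : ℝ} (hs : 0 < s) (x : ℕ → ℝ) (m : ℕ)
    (hx : ∀ n, m ≤ n → x n = 0) : Memlp s x := by
  apply summable_of_ne_finset_zero (s := Finset.range m)
  intro n hn
  simp only [Finset.mem_range, not_lt] at hn
  rw [hx n hn, abs_zero, Real.zero_rpow hs.ne']

lemma lpNorm_nonneg (s : ℝ) (x : ℕ → ℝ) : 0 ≤ lpNorm s x :=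
  Real.rpow_nonneg (tsum_nonneg fun n => Real.rpow_nonneg (abs_nonneg _) _) _

lemma lpNorm_e {s : ℝ} (hs : 0 < s) (k : ℕ) : lpNorm s (e k) = 1 := by
  unfold lpNorm
  have h : (fun n => |e k n| ^ s) = fun n => if n = k then (1:ℝ) else 0 := by
    funext n
    by_cases h : n = k <;>
      simp [e, h, abs_one, Real.one_rpow, abs_zero, Real.zero_rpow hs.ne']
  rw [h, tsum_ite_eq, Real.one_rpow]

lemma memlp_e {s : ℝ} (hs : 0 < s) (k : ℕ) : Memlp s (e k) := by
  apply memlp_fin hs _ (k+1)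
  intro n hn
  have h : ¬ n = k := by omega
  simp [e, h]

lemma coord_le (E : SeqSpace) (hunit : E.UnitVectors) (x : ℕ → ℝ)
    (hx : E.mem x) (n : ℕ) : |x n| ≤ E.nrm x := by
  have hle : ∀ m, |(x n • e n) m| ≤ |x m| := by
    intro m
    by_cases h : m = n
    · subst h; simp [e, smul_eq_mul]
    · simp [e, h, smul_eq_mul, abs_nonneg]
  have h2 := (E.ideal _ x hx hle).2
  rwa [E.nrm_smul _ _ (hunit n).1, (hunit n).2, mul_one] at h2

lemma rpow_rpow_div {a s t : ℝ} (ha : 0 ≤ a) (hs : s ≠ 0) (ht : t ≠ 0) :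
    (a ^ (s / t)) ^ (1 / s) = a ^ (1 / t) := by
  rw [← Real.rpow_mul ha]
  congr 1
  field_simp

/-- inclusion lemma: every `(E,p)`-summing operator is
`(M(ℓ_r,E),q)`-summing, `1/r = 1/p - 1/q`, with the stated norm estimate. -/
theorem statement2 (p q r : ℝ) (hp : 1 ≤ p) (hpq : p < q) (hr : 1 / r = 1 / p - 1 / q)
    (E : SeqSpace) (hunit : E.UnitVectors) (hlpE : ∀ x, Memlp p x → E.mem x)
    {X Y : Type*} [NormedAddCommGroup X] [NormedSpace ℝ X]
    [NormedAddCommGroup Y] [NormedSpace ℝ Y]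
    (T : X →L[ℝ] Y) (hT : Summing E.nrm p T) :
    Summing (mulNorm (Memlp r) (lpNorm r) E.nrm) q T ∧
    piN (mulNorm (Memlp r) (lpNorm r) E.nrm) q T ≤
      cPN E.nrm p * (cPN (mulNorm (Memlp r) (lpNorm r) E.nrm) q)⁻¹ * piN E.nrm p T := by
  obtain ⟨D, hD0, hTD⟩ := hT
  have hp0 : (0:ℝ) < p := lt_of_lt_of_le zero_lt_one hp
  have hq0 : (0:ℝ) < q := lt_trans hp0 hpq
  have hrinv : 0 < 1/r := by
    rw [hr]
    have h1 : 1/q < 1/p := one_div_lt_one_div_of_lt hp0 hpq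
    linarith
  have hr0 : (0:ℝ) < r := one_div_pos.mp hrinv
  have hQR : Real.HolderConjugate (q/p) (r/p) := by
    rw [Real.holderConjugate_iff]
    constructor
    · exact (one_lt_div hp0).2 hpq
    · have h1 : p / r = p * (1/p - 1/q) := by rw [← hr]; ring
      rw [inv_div, inv_div, h1]
      field_simp
      ring
  -- weak norm facts
  have wn_bdd : ∀ (s : ℝ), 0 < s → ∀ (m : ℕ) (x : Fin m → X),
      BddAbove {c | ∃ φ : X →L[ℝ] ℝ, ‖φ‖ ≤ 1 ∧ c = (∑ i, |φ (x i)| ^ s) ^ (1/s)} := by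
    intro s hs m x
    refine ⟨(∑ i, ‖x i‖ ^ s) ^ (1/s), ?_⟩
    rintro c ⟨φ, hφ, rfl⟩
    refine Real.rpow_le_rpow
      (Finset.sum_nonneg fun i _ => Real.rpow_nonneg (abs_nonneg _) _)
      (Finset.sum_le_sum fun i _ => Real.rpow_le_rpow (abs_nonneg _) ?_ hs.le)
      (by positivity)
    calc |φ (x i)| = ‖φ (x i)‖ := (Real.norm_eq_abs _).symm
      _ ≤ ‖φ‖ * ‖x i‖ := φ.le_opNorm _
      _ ≤ 1 * ‖x i‖ := mul_le_mul_of_nonneg_right hφ (norm_nonneg _)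
      _ = ‖x i‖ := one_mul _
  have wn_nonneg : ∀ (s : ℝ), 0 < s → ∀ (m : ℕ) (x : Fin m → X), 0 ≤ weakNorm s x := by
    intro s hs m x
    apply le_csSup (wn_bdd s hs m x)
    refine ⟨0, by simp, ?_⟩
    simp [Real.zero_rpow hs.ne', Real.zero_rpow (one_div_ne_zero hs.ne'),
      Real.zero_rpow (inv_ne_zero hs.ne')]
  -- the truncated norm sequences are in E
  have prod_mem : ∀ (m : ℕ) (x' : Fin m → X),
      E.mem (fun n => if h : n < m then ‖T (x' ⟨n, h⟩)‖ else 0) := by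
    intro m x'
    apply hlpE
    apply memlp_fin hp0 _ m
    intro n hn
    rw [dif_neg (by omega)]
  have prod_le : ∀ (m : ℕ) (x : Fin m → X) (y : ℕ → ℝ),
      E.nrm (fun n => (if h : n < m then ‖T (x ⟨n, h⟩)‖ else 0) * y n) ≤
        E.nrm (fun n => if h : n < m then ‖T (y n • x ⟨n, h⟩)‖ else 0) := by
    intro m x y
    refine (E.ideal _ _ (prod_mem m (fun i => y i.val • x i)) ?_).2
    intro n
    by_cases h : n < m
    · rw [dif_pos h, dif_pos h]
      have h1 : |‖T (x ⟨n, h⟩)‖ * y n| = ‖T (x ⟨n, h⟩)‖ * |y n| := by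
        rw [abs_mul, abs_of_nonneg (norm_nonneg _)]
      rw [h1, map_smul, norm_smul, Real.norm_eq_abs,
        abs_of_nonneg (mul_nonneg (abs_nonneg _) (norm_nonneg _)), mul_comm]
    · rw [dif_neg h, dif_neg h]
      simp
  by_cases hbdd : BddAbove {c | ∃ x, Memlp p x ∧ lpNorm p x ≤ 1 ∧ c = E.nrm x}
  · -- main case
    have cp1 : (1:ℝ) ≤ cPN E.nrm p := by
      apply le_csSup hbdd
      exact ⟨e 0, memlp_e hp0 0, le_of_eq (lpNorm_e hp0 0), ((hunit 0).2).symm⟩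
    have cp0 : (0:ℝ) ≤ cPN E.nrm p := le_trans zero_le_one cp1
    have hball : ∀ z, Memlp p z → lpNorm p z ≤ 1 → E.nrm z ≤ cPN E.nrm p := fun z h1 h2 =>
      le_csSup hbdd ⟨z, h1, h2, rfl⟩
    -- Hölder for the weak norms
    have holder_weak : ∀ (m : ℕ) (x : Fin m → X) (y : ℕ → ℝ), Memlp r y → lpNorm r y ≤ 1 →
        weakNorm p (fun i : Fin m => y i.val • x i) ≤ weakNorm q x := by
      intro m x y hyS hy1
      apply Real.sSup_le _ (wn_nonneg q hq0 m x)
      rintro c ⟨φ, hφ, rfl⟩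
      have e1 : (∑ i : Fin m, |φ (y i.val • x i)| ^ p)
          = ∑ i : Fin m, |y i.val| ^ p * |φ (x i)| ^ p :=
        Finset.sum_congr rfl fun i _ => by
          rw [map_smul, smul_eq_mul, abs_mul, Real.mul_rpow (abs_nonneg _) (abs_nonneg _)]
      have hH := Real.inner_le_Lp_mul_Lq_of_nonneg (s := Finset.univ)
        (f := fun i : Fin m => |y i.val| ^ p) (g := fun i : Fin m => |φ (x i)| ^ p) hQR.symm
        (fun i _ => Real.rpow_nonneg (abs_nonneg _) _)
        (fun i _ => Real.rpow_nonneg (abs_nonneg _) _)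
      have hfq : (∑ i : Fin m, ((fun i : Fin m => |y i.val| ^ p) i) ^ (r/p))
          = ∑ i : Fin m, |y i.val| ^ r :=
        Finset.sum_congr rfl fun i _ => by
          rw [← Real.rpow_mul (abs_nonneg _)]; congr 1; field_simp
      have hgq : (∑ i : Fin m, ((fun i : Fin m => |φ (x i)| ^ p) i) ^ (q/p))
          = ∑ i : Fin m, |φ (x i)| ^ q :=
        Finset.sum_congr rfl fun i _ => by
          rw [← Real.rpow_mul (abs_nonneg _)]; congr 1; field_simp
      rw [hfq, hgq, one_div_div, one_div_div] at hH
      have hA0 : 0 ≤ ∑ i : Fin m, |y i.val| ^ r :=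
        Finset.sum_nonneg fun i _ => Real.rpow_nonneg (abs_nonneg _) _
      have hB0 : 0 ≤ ∑ i : Fin m, |φ (x i)| ^ q :=
        Finset.sum_nonneg fun i _ => Real.rpow_nonneg (abs_nonneg _) _
      have hAle : ∑ i : Fin m, |y i.val| ^ r ≤ ∑' n, |y n| ^ r := by
        rw [Fin.sum_univ_eq_sum_range (fun n => |y n| ^ r) m]
        exact Summable.sum_le_tsum _ (fun i _ => Real.rpow_nonneg (abs_nonneg _) _) hyS
      calc (∑ i : Fin m, |φ (y i.val • x i)| ^ p) ^ (1/p)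
          ≤ ((∑ i : Fin m, |y i.val| ^ r) ^ (p/r)
              * (∑ i : Fin m, |φ (x i)| ^ q) ^ (p/q)) ^ (1/p) := by
            refine Real.rpow_le_rpow
              (Finset.sum_nonneg fun i _ => Real.rpow_nonneg (abs_nonneg _) _) ?_
              (by positivity)
            rw [e1]; exact hH
        _ = (∑ i : Fin m, |y i.val| ^ r) ^ (1/r)
              * (∑ i : Fin m, |φ (x i)| ^ q) ^ (1/q) := by
            rw [Real.mul_rpow (Real.rpow_nonneg hA0 _) (Real.rpow_nonneg hB0 _),
              rpow_rpow_div hA0 hp0.ne' hr0.ne', rpow_rpow_div hB0 hp0.ne' hq0.ne']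
        _ ≤ 1 * weakNorm q x := by
            refine mul_le_mul ?_ ?_ (Real.rpow_nonneg hB0 _) zero_le_one
            · calc (∑ i : Fin m, |y i.val| ^ r) ^ (1/r)
                  ≤ (∑' n, |y n| ^ r) ^ (1/r) :=
                    Real.rpow_le_rpow hA0 hAle (by positivity)
                _ ≤ 1 := hy1
            · exact le_csSup (wn_bdd q hq0 m x) ⟨φ, hφ, rfl⟩
        _ = weakNorm q x := one_mul _
    -- tsum Hölder : product of unit balls
    have mul_ball : ∀ x y : ℕ → ℝ, Memlp q x → lpNorm q x ≤ 1 → Memlp r y → lpNorm r y ≤ 1 →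
        Memlp p (fun n => x n * y n) ∧ lpNorm p (fun n => x n * y n) ≤ 1 := by
      intro x y hx hx1 hy hy1
      have hfq : (fun n => (|x n| ^ p) ^ (q/p)) = fun n => |x n| ^ q := by
        funext n; rw [← Real.rpow_mul (abs_nonneg _)]; congr 1; field_simp
      have hgr : (fun n => (|y n| ^ p) ^ (r/p)) = fun n => |y n| ^ r := by
        funext n; rw [← Real.rpow_mul (abs_nonneg _)]; congr 1; field_simp
      have hprod : (fun n => |x n| ^ p * |y n| ^ p) = fun n => |x n * y n| ^ p := by
        funext n; rw [abs_mul, Real.mul_rpow (abs_nonneg _) (abs_nonneg _)]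
      obtain ⟨hsum, hle⟩ := Real.summable_and_inner_le_Lp_mul_Lq_tsum_of_nonneg
        (f := fun n => |x n| ^ p) (g := fun n => |y n| ^ p) hQR
        (fun n => Real.rpow_nonneg (abs_nonneg _) _)
        (fun n => Real.rpow_nonneg (abs_nonneg _) _)
        (by rw [show (fun n => (fun n => |x n| ^ p) n ^ (q/p)) = fun n => |x n| ^ q from hfq]
            exact hx)
        (by rw [show (fun n => (fun n => |y n| ^ p) n ^ (r/p)) = fun n => |y n| ^ r from hgr]
            exact hy)
      rw [show (fun n => (fun n => |x n| ^ p) n * (fun n => |y n| ^ p) n)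
            = fun n => |x n * y n| ^ p from hprod] at hsum
      rw [show (fun n => (fun n => |x n| ^ p) n ^ (q/p)) = fun n => |x n| ^ q from hfq,
        show (fun n => (fun n => |y n| ^ p) n ^ (r/p)) = fun n => |y n| ^ r from hgr,
        one_div_div, one_div_div] at hle
      refine ⟨hsum, ?_⟩
      have tsA : 0 ≤ ∑' n, |x n| ^ q := tsum_nonneg fun n => Real.rpow_nonneg (abs_nonneg _) _
      have tsB : 0 ≤ ∑' n, |y n| ^ r := tsum_nonneg fun n => Real.rpow_nonneg (abs_nonneg _) _
      have step : lpNorm p (fun n => x n * y n)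
          ≤ ((∑' n, |x n| ^ q) ^ (p/q) * (∑' n, |y n| ^ r) ^ (p/r)) ^ (1/p) := by
        refine Real.rpow_le_rpow
          (tsum_nonneg fun n => Real.rpow_nonneg (abs_nonneg _) _) ?_ (by positivity)
        calc ∑' n, |x n * y n| ^ p = ∑' n, |x n| ^ p * |y n| ^ p := by rw [hprod]
          _ ≤ _ := hle
      have hsplit : ((∑' n, |x n| ^ q) ^ (p/q) * (∑' n, |y n| ^ r) ^ (p/r)) ^ (1/p)
          = lpNorm q x * lpNorm r y := by
        rw [Real.mul_rpow (Real.rpow_nonneg tsA _) (Real.rpow_nonneg tsB _),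
          rpow_rpow_div tsA hp0.ne' hq0.ne', rpow_rpow_div tsB hp0.ne' hr0.ne']
        rfl
      rw [hsplit] at step
      exact step.trans (mul_le_one₀ hx1 (lpNorm_nonneg r y) hy1)
    -- the norm of M(l_r, E) on the l_q ball is at most cp
    have hMball : ∀ x, Memlp q x → lpNorm q x ≤ 1 →
        mulNorm (Memlp r) (lpNorm r) E.nrm x ≤ cPN E.nrm p := by
      intro x hx hx1
      apply Real.sSup_le _ cp0
      rintro c ⟨y, hyS, hy1, rfl⟩
      obtain ⟨h1, h2⟩ := mul_ball x y hx hx1 hyS hy1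
      exact hball _ h1 h2
    have hbddM : BddAbove {c | ∃ x, Memlp q x ∧ lpNorm q x ≤ 1 ∧
        c = mulNorm (Memlp r) (lpNorm r) E.nrm x} := by
      refine ⟨cPN E.nrm p, ?_⟩
      rintro c ⟨x, h1, h2, rfl⟩
      exact hMball x h1 h2
    -- νM (e 0) = 1
    have key_e0 : ∀ y : ℕ → ℝ, E.nrm (fun n => e 0 n * y n) = |y 0| := by
      intro y
      have h : (fun n => e 0 n * y n) = y 0 • e 0 := by
        funext n
        by_cases h : n = 0 <;> simp [e, h, mul_comm]
      rw [h, E.nrm_smul _ _ (hunit 0).1, (hunit 0).2, mul_one]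
    have abs0_le : ∀ y : ℕ → ℝ, Memlp r y → lpNorm r y ≤ 1 → |y 0| ≤ 1 := by
      intro y hyS hy1
      calc |y 0| = (|y 0| ^ r) ^ (1/r) := by
            rw [← Real.rpow_mul (abs_nonneg _), mul_one_div_cancel hr0.ne', Real.rpow_one]
        _ ≤ (∑' n, |y n| ^ r) ^ (1/r) :=
            Real.rpow_le_rpow (Real.rpow_nonneg (abs_nonneg _) _)
              (Summable.le_tsum hyS 0 fun j _ => Real.rpow_nonneg (abs_nonneg _) _) (by positivity)
        _ ≤ 1 := hy1
    have hνMe0 : mulNorm (Memlp r) (lpNorm r) E.nrm (e 0) = 1 := by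
      apply le_antisymm
      · apply Real.sSup_le _ zero_le_one
        rintro c ⟨y, hyS, hy1, rfl⟩
        rw [key_e0]
        exact abs0_le y hyS hy1
      · apply le_csSup
        · refine ⟨1, ?_⟩
          rintro c ⟨y, hyS, hy1, rfl⟩
          rw [key_e0]
          exact abs0_le y hyS hy1
        · refine ⟨e 0, memlp_e hr0 0, le_of_eq (lpNorm_e hr0 0), ?_⟩
          rw [key_e0]
          simp [e]
    have cqM1 : (1:ℝ) ≤ cPN (mulNorm (Memlp r) (lpNorm r) E.nrm) q :=
      le_csSup hbddM ⟨e 0, memlp_e hq0 0, le_of_eq (lpNorm_e hq0 0), hνMe0.symm⟩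
    have cqM0 : (0:ℝ) < cPN (mulNorm (Memlp r) (lpNorm r) E.nrm) q :=
      lt_of_lt_of_le zero_lt_one cqM1
    -- the key estimate
    have summing_of : ∀ C, 0 ≤ C → SummingWith E.nrm p T C →
        SummingWith (mulNorm (Memlp r) (lpNorm r) E.nrm) q T
          (cPN E.nrm p * (cPN (mulNorm (Memlp r) (lpNorm r) E.nrm) q)⁻¹ * C) := by
      intro C hC0 hC m x
      have hkey : mulNorm (Memlp r) (lpNorm r) E.nrm
          (fun n => if h : n < m then ‖T (x ⟨n, h⟩)‖ else 0)
          ≤ C * cPN E.nrm p * weakNorm q x := by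
        apply Real.sSup_le _ (mul_nonneg (mul_nonneg hC0 cp0) (wn_nonneg q hq0 m x))
        rintro c ⟨y, hyS, hy1, rfl⟩
        calc E.nrm (fun n => (if h : n < m then ‖T (x ⟨n, h⟩)‖ else 0) * y n)
            ≤ E.nrm (fun n => if h : n < m then ‖T (y n • x ⟨n, h⟩)‖ else 0) :=
              prod_le m x y
          _ ≤ C * cPN E.nrm p * weakNorm p (fun i : Fin m => y i.val • x i) := hC m (fun i : Fin m => y i.val • x i)
          _ ≤ C * cPN E.nrm p * weakNorm q x :=
              mul_le_mul_of_nonneg_left (holder_weak m x y hyS hy1)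
                (mul_nonneg hC0 cp0)
      have heq : cPN E.nrm p * (cPN (mulNorm (Memlp r) (lpNorm r) E.nrm) q)⁻¹ * C
          * cPN (mulNorm (Memlp r) (lpNorm r) E.nrm) q = C * cPN E.nrm p := by
        field_simp
      rw [heq]
      exact hkey
      
    have hknn : 0 ≤ cPN E.nrm p * (cPN (mulNorm (Memlp r) (lpNorm r) E.nrm) q)⁻¹ :=
      mul_nonneg cp0 (inv_nonneg.2 cqM0.le)
    have hk : 0 < cPN E.nrm p * (cPN (mulNorm (Memlp r) (lpNorm r) E.nrm) q)⁻¹ :=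
      mul_pos (lt_of_lt_of_le zero_lt_one cp1) (inv_pos.2 cqM0)
    constructor
    · exact ⟨_, mul_nonneg hknn hD0, summing_of D hD0 hTD⟩
    · have hlb : BddBelow {C | 0 ≤ C ∧
          SummingWith (mulNorm (Memlp r) (lpNorm r) E.nrm) q T C} := ⟨0, fun b hb => hb.1⟩
      have hstep : ∀ C, 0 ≤ C → SummingWith E.nrm p T C →
          piN (mulNorm (Memlp r) (lpNorm r) E.nrm) q T ≤
            cPN E.nrm p * (cPN (mulNorm (Memlp r) (lpNorm r) E.nrm) q)⁻¹ * C := by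
        intro C h0 hC
        exact csInf_le hlb ⟨mul_nonneg hknn h0, summing_of C h0 hC⟩
      have hdiv : piN (mulNorm (Memlp r) (lpNorm r) E.nrm) q T /
          (cPN E.nrm p * (cPN (mulNorm (Memlp r) (lpNorm r) E.nrm) q)⁻¹) ≤ piN E.nrm p T := by
        refine le_csInf ⟨D, hD0, hTD⟩ ?_
        rintro C ⟨h0, hC⟩
        rw [div_le_iff₀ hk]
        calc piN (mulNorm (Memlp r) (lpNorm r) E.nrm) q T
            ≤ cPN E.nrm p * (cPN (mulNorm (Memlp r) (lpNorm r) E.nrm) q)⁻¹ * C :=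
              hstep C h0 hC
          _ = C * (cPN E.nrm p * (cPN (mulNorm (Memlp r) (lpNorm r) E.nrm) q)⁻¹) := by ring
      rw [div_le_iff₀ hk] at hdiv
      calc piN (mulNorm (Memlp r) (lpNorm r) E.nrm) q T
          ≤ piN E.nrm p T * (cPN E.nrm p * (cPN (mulNorm (Memlp r) (lpNorm r) E.nrm) q)⁻¹) :=
            hdiv
        _ = cPN E.nrm p * (cPN (mulNorm (Memlp r) (lpNorm r) E.nrm) q)⁻¹ * piN E.nrm p T := by
            ring
  · -- degenerate case : cPN E.nrm p = 0 and T = 0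
    have hsup0 : cPN E.nrm p = 0 := Real.sSup_of_not_bddAbove hbdd
    have hT0 : ∀ v : X, T v = 0 := by
      intro v
      have h := hTD 1 (fun _ : Fin 1 => v)
      rw [hsup0] at h
      have h' : E.nrm (fun n => if h : n < 1 then
          ‖T ((fun _ : Fin 1 => v) ⟨n, h⟩)‖ else 0) ≤ 0 := by
        calc E.nrm (fun n => if h : n < 1 then ‖T ((fun _ : Fin 1 => v) ⟨n, h⟩)‖ else 0)
            ≤ D * 0 * weakNorm p (fun _ : Fin 1 => v) := h
          _ = 0 := by ring
      have hc := coord_le E hunit _ (prod_mem 1 (fun _ : Fin 1 => v)) 0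
      have hv : ‖T v‖ = |(fun n => if h : n < 1 then
          ‖T ((fun _ : Fin 1 => v) ⟨n, h⟩)‖ else 0) 0| := by simp
      have : ‖T v‖ ≤ 0 := le_trans (le_trans (le_of_eq hv) hc) h'
      exact norm_le_zero_iff.mp this
    have hνM0 : mulNorm (Memlp r) (lpNorm r) E.nrm 0 = 0 := by
      unfold mulNorm
      have hset : {c | ∃ y, Memlp r y ∧ lpNorm r y ≤ 1 ∧
          c = E.nrm (fun n => (0:ℕ→ℝ) n * y n)} = {0} := by
        ext c
        constructor
        · rintro ⟨y, _, _, rfl⟩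
          have h : (fun n => (0:ℕ→ℝ) n * y n) = 0 := by funext n; simp
          rw [Set.mem_singleton_iff, h, nrm_zero' E]
        · rintro rfl
          refine ⟨0, memlp_fin hr0 0 0 (fun n _ => rfl), ?_, ?_⟩
          · unfold lpNorm
            simp [Real.zero_rpow hr0.ne', Real.zero_rpow (one_div_ne_zero hr0.ne'),
              Real.zero_rpow (inv_ne_zero hr0.ne')]
          · have h : (fun n => (0:ℕ→ℝ) n * (0:ℕ→ℝ) n) = 0 := by funext n; simp
            rw [h, nrm_zero' E]
      rw [hset, csSup_singleton]
    have hSW0 : SummingWith (mulNorm (Memlp r) (lpNorm r) E.nrm) q T 0 := by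
      intro m x
      have hσ : (fun n => if h : n < m then ‖T (x ⟨n, h⟩)‖ else 0) = (0 : ℕ → ℝ) := by
        funext n
        by_cases h : n < m
        · rw [dif_pos h, hT0, norm_zero]; rfl
        · rw [dif_neg h]; rfl
      rw [hσ, hνM0]
      have : (0:ℝ) * cPN (mulNorm (Memlp r) (lpNorm r) E.nrm) q * weakNorm q x = 0 := by ring
      rw [this]
    have hpi0 : piN (mulNorm (Memlp r) (lpNorm r) E.nrm) q T = 0 := by
      apply le_antisymm
      · exact csInf_le ⟨0, fun b hb => hb.1⟩ ⟨le_refl 0, hSW0⟩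
      · exact le_csInf ⟨0, le_refl 0, hSW0⟩ fun b hb => hb.1
    refine ⟨⟨0, le_refl 0, hSW0⟩, ?_⟩
    rw [hpi0, hsup0]
    simp
end Paper
end
end

section
/- Every 2-convex maximal symmetric Banach sequence space E is an interpolation space with respect to the Banach couple (ℓ₂, ℓ∞). -/
open scoped BigOperators ZeroAtInfty

noncomputable section

namespace Paper

/-! ### Auxiliary lemmas -/

def decrSet (x : ℕ → ℝ) (n : ℕ) : Set ℝ :=
  {a : ℝ | ∃ J : Finset ℕ, J.card ≤ n ∧ ∀ i ∉ J, |x i| ≤ a}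

lemma decr_eq_sInf (x : ℕ → ℝ) (n : ℕ) : decr x n = sInf (decrSet x n) := rfl

lemma decrSet_nonneg {x : ℕ → ℝ} {n : ℕ} {a : ℝ} (ha : a ∈ decrSet x n) : 0 ≤ a := by
  obtain ⟨J, _, hJ⟩ := ha
  obtain ⟨i, hi⟩ := Infinite.exists_notMem_finset J
  exact le_trans (abs_nonneg _) (hJ i hi)

lemma decrSet_bddBelow (x : ℕ → ℝ) (n : ℕ) : BddBelow (decrSet x n) :=
  ⟨0, fun _ ha => decrSet_nonneg ha⟩

lemma decr_nonneg (x : ℕ → ℝ) (n : ℕ) : 0 ≤ decr x n := by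
  rcases Set.eq_empty_or_nonempty (decrSet x n) with h | h
  · rw [decr_eq_sInf, h, Real.sInf_empty]
  · exact le_csInf h fun _ ha => decrSet_nonneg ha

lemma memLinf_of_decrSet_nonempty {x : ℕ → ℝ} {n : ℕ}
    (h : (decrSet x n).Nonempty) : MemLinf x := by
  obtain ⟨a, J, _, hJ⟩ := h
  refine ⟨a + ∑ i ∈ J, |x i|, fun i => ?_⟩
  by_cases hi : i ∈ J
  · have h1 : |x i| ≤ ∑ j ∈ J, |x j| :=
      Finset.single_le_sum (fun j _ => abs_nonneg (x j)) hi
    have h2 : 0 ≤ a := by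
      exact decrSet_nonneg ⟨J, ‹J.card ≤ n›, hJ⟩
    linarith
  · have := hJ i hi
    have h3 : 0 ≤ ∑ j ∈ J, |x j| := Finset.sum_nonneg fun j _ => abs_nonneg _
    linarith

lemma decrSet_nonempty {x : ℕ → ℝ} (hx : MemLinf x) (n : ℕ) :
    (decrSet x n).Nonempty := by
  obtain ⟨C, hC⟩ := hx
  exact ⟨C, ∅, by simp, fun i _ => hC i⟩

lemma decr_le_of_mem {x : ℕ → ℝ} {n : ℕ} {a : ℝ} (ha : a ∈ decrSet x n) :
    decr x n ≤ a := csInf_le (decrSet_bddBelow x n) ha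

lemma le_decr {x : ℕ → ℝ} {n : ℕ} {c : ℝ} (hx : MemLinf x)
    (h : ∀ a ∈ decrSet x n, c ≤ a) : c ≤ decr x n :=
  le_csInf (decrSet_nonempty hx n) h

lemma decr_le_bound {x : ℕ → ℝ} {C : ℝ} (hC : ∀ i, |x i| ≤ C) (n : ℕ) :
    decr x n ≤ C := decr_le_of_mem ⟨∅, by simp, fun i _ => hC i⟩

lemma decr_antitone {x : ℕ → ℝ} (hx : MemLinf x) : Antitone (decr x) := by
  intro n m hnm
  refine csInf_le_csInf (decrSet_bddBelow x m) (decrSet_nonempty hx n) ?_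
  rintro a ⟨J, hJ, h⟩
  exact ⟨J, le_trans hJ hnm, h⟩

lemma decr_le_of_inj {z w : ℕ → ℝ} (hw : MemLinf w) (π : ℕ → ℕ)
    (hπ : Function.Injective π) (h : ∀ i, |z i| ≤ |w (π i)|) (n : ℕ) :
    decr z n ≤ decr w n := by
  refine le_csInf (decrSet_nonempty hw n) ?_
  rintro a ⟨J, hJ, hb⟩
  refine decr_le_of_mem ⟨J.preimage π (Set.injOn_of_injective hπ), ?_, fun i hi => ?_⟩
  · exact le_trans (Finset.card_le_card_of_injOn π (fun i hi => Finset.mem_preimage.1 hi) hπ.injOn) hJ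
  · have : π i ∉ J := fun hc => hi (Finset.mem_preimage.2 hc)
    exact le_trans (h i) (hb _ this)

lemma decr_mono_pw {z w : ℕ → ℝ} (hw : MemLinf w) (h : ∀ i, |z i| ≤ |w i|) (n : ℕ) :
    decr z n ≤ decr w n :=
  decr_le_of_inj hw id (fun _ _ => id) h n

lemma decr_eq_self {u : ℕ → ℝ} (hu : Antitone u) (h0 : ∀ n, 0 ≤ u n) :
    decr u = u := by
  funext n
  have hb : MemLinf u := ⟨u 0, fun i => by rw [abs_of_nonneg (h0 i)]; exact hu (Nat.zero_le i)⟩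
  apply le_antisymm
  · refine decr_le_of_mem ⟨Finset.range n, by simp, fun i hi => ?_⟩
    rw [abs_of_nonneg (h0 i)]
    exact hu (by simpa using hi)
  · refine le_decr hb ?_
    rintro a ⟨J, hJ, hb'⟩
    obtain ⟨i, hi, hin⟩ : ∃ i ∈ Finset.range (n+1), i ∉ J := by
      by_contra hcon
      push_neg at hcon
      have := Finset.card_le_card (fun i hi => hcon i hi)
      simp at this; omega
    calc u n ≤ u i := hu (by simpa using Nat.lt_succ_iff.mp (Finset.mem_range.mp hi))
    _ = |u i| := (abs_of_nonneg (h0 i)).symm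
    _ ≤ a := hb' i hin

lemma decr_add_le {p q : ℕ → ℝ} (hp : MemLinf p) {c : ℝ} (hc : ∀ i, |q i| ≤ c) (n : ℕ) :
    decr (fun i => p i + q i) n ≤ decr p n + c := by
  refine le_of_forall_pos_le_add fun ε hε => ?_
  obtain ⟨a, ha, hlt⟩ := exists_lt_of_csInf_lt (decrSet_nonempty hp n)
    (show sInf (decrSet p n) < decr p n + ε by rw [← decr_eq_sInf]; linarith)
  obtain ⟨J, hJ, hb⟩ := ha
  have : decr (fun i => p i + q i) n ≤ a + c :=
    decr_le_of_mem ⟨J, hJ, fun i hi =>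
      le_trans (abs_add_le _ _) (add_le_add (hb i hi) (hc i))⟩
  linarith

lemma decr_zero_of_support {z : ℕ → ℝ} {s : Finset ℕ} (h : ∀ i ∉ s, z i = 0)
    {n : ℕ} (hn : s.card ≤ n) : decr z n = 0 :=
  le_antisymm (decr_le_of_mem ⟨s, hn, fun i hi => by rw [h i hi]; simp⟩) (decr_nonneg z n)

lemma le_decr_of_many {x : ℕ → ℝ} (hx : MemLinf x) {t : Finset ℕ} {k : ℕ} {c : ℝ}
    (htc : t.card = k + 1) (h : ∀ i ∈ t, c ≤ |x i|) : c ≤ decr x k := by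
  refine le_decr hx ?_
  rintro a ⟨J, hJ, hb⟩
  obtain ⟨i, hit, hiJ⟩ : ∃ i ∈ t, i ∉ J := by
    by_contra hcon
    push_neg at hcon
    have := Finset.card_le_card (fun i hi => hcon i hi)
    omega
  exact le_trans (h i hit) (hb i hiJ)
lemma abs_sq_rpow (t : ℝ) : |t| ^ (2:ℝ) = t ^ 2 := by
  rw [show (2:ℝ) = ((2:ℕ):ℝ) by norm_num, Real.rpow_natCast, sq_abs]

lemma memlp2_tendsto {q : ℕ → ℝ} (hq : Memlp 2 q) :
    Filter.Tendsto (fun n => |q n|) Filter.atTop (nhds 0) := by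
  have h1 : Filter.Tendsto (fun n => |q n| ^ (2:ℝ)) Filter.atTop (nhds 0) := hq.tendsto_atTop_zero
  have h2 : Filter.Tendsto (fun n => Real.sqrt (|q n| ^ (2:ℝ))) Filter.atTop (nhds (Real.sqrt 0)) :=
    (Real.continuous_sqrt.tendsto 0).comp h1
  simp only [Real.sqrt_zero] at h2
  convert h2 using 2 with n
  rw [abs_sq_rpow, Real.sqrt_sq_eq_abs]

lemma memLinf_of_memlp2 {q : ℕ → ℝ} (hq : Memlp 2 q) : MemLinf q := by
  obtain ⟨C, hC⟩ := (memlp2_tendsto hq).bddAbove_range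
  exact ⟨C, fun n => hC (Set.mem_range_self n)⟩

/-- Existence of an "argmax off a finite set" for a null sequence. -/
lemma exists_argmax_off {q : ℕ → ℝ} (hq : Filter.Tendsto (fun n => |q n|) Filter.atTop (nhds 0))
    (s : Finset ℕ) : ∃ i ∉ s, ∀ j ∉ s, |q j| ≤ |q i| := by
  by_cases hz : ∀ j ∉ s, q j = 0
  · obtain ⟨i, hi⟩ := Infinite.exists_notMem_finset s
    exact ⟨i, hi, fun j hj => by rw [hz j hj, hz i hi]⟩
  · push_neg at hz
    obtain ⟨j₀, hj₀s, hj₀⟩ := hz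
    have hpos : 0 < |q j₀| := abs_pos.2 hj₀
    obtain ⟨N, hN⟩ := Filter.eventually_atTop.1 (hq.eventually_lt_const hpos)
    have hj₀N : j₀ < N := by
      by_contra hc
      exact absurd (hN j₀ (not_lt.mp hc)) (lt_irrefl _)
    set F := (Finset.range N).filter (fun j => j ∉ s) with hF
    have hj₀F : j₀ ∈ F := by simp [hF, hj₀N, hj₀s]
    obtain ⟨i, hiF, hmax⟩ := Finset.exists_max_image F (fun j => |q j|) ⟨j₀, hj₀F⟩
    have his : i ∉ s := (Finset.mem_filter.1 hiF).2
    refine ⟨i, his, fun j hj => ?_⟩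
    by_cases hjN : j < N
    · exact hmax j (by simp [hF, hjN, hj])
    · exact le_trans (hN j (not_lt.mp hjN)).le (hmax j₀ hj₀F)

/-- Partial sums of squares of the decreasing rearrangement of an `ℓ₂` sequence
are bounded by the square of its `ℓ₂` norm. -/
lemma sum_decr_sq_le_tsum {q : ℕ → ℝ} (hq : Memlp 2 q) (m : ℕ) :
    ∑ k ∈ Finset.range m, decr q k ^ 2 ≤ ∑' n, |q n| ^ (2:ℝ) := by
  have key : ∀ m : ℕ, ∃ s : Finset ℕ, s.card = m ∧
      ∑ k ∈ Finset.range m, decr q k ^ 2 ≤ ∑ i ∈ s, q i ^ 2 := by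
    intro m
    induction m with
    | zero => exact ⟨∅, rfl, by simp⟩
    | succ m ih =>
      obtain ⟨s, hcard, hs⟩ := ih
      obtain ⟨i, his, hmax⟩ := exists_argmax_off (memlp2_tendsto hq) s
      refine ⟨insert i s, by rw [Finset.card_insert_of_notMem his, hcard], ?_⟩
      rw [Finset.sum_range_succ, Finset.sum_insert his]
      have hd : decr q m ≤ |q i| := decr_le_of_mem ⟨s, hcard.le, hmax⟩
      have : decr q m ^ 2 ≤ q i ^ 2 := by
        rw [← sq_abs (q i)]
        exact pow_le_pow_left₀ (decr_nonneg q m) hd 2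
      linarith
  obtain ⟨s, _, hs⟩ := key m
  refine le_trans hs ?_
  have : ∀ i ∈ s, q i ^ 2 = |q i| ^ (2:ℝ) := fun i _ => (abs_sq_rpow (q i)).symm
  rw [Finset.sum_congr rfl this]
  exact hq.sum_le_tsum s (fun n _ => Real.rpow_nonneg (abs_nonneg _) 2)

/-- The sum of squares over any finite set is bounded by partial sums of the
squared decreasing rearrangement. -/
lemma sum_sq_le_sum_decr_sq {x : ℕ → ℝ} (hx : MemLinf x) (s : Finset ℕ) :
    ∑ i ∈ s, x i ^ 2 ≤ ∑ k ∈ Finset.range s.card, decr x k ^ 2 := by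
  suffices h : ∀ (n : ℕ) (s : Finset ℕ), s.card = n →
      ∑ i ∈ s, x i ^ 2 ≤ ∑ k ∈ Finset.range s.card, decr x k ^ 2 from h s.card s rfl
  intro n
  induction n with
  | zero =>
    intro s hn
    rw [Finset.card_eq_zero.1 hn]; simp
  | succ n ih =>
    intro s hn
    have hne : s.Nonempty := Finset.card_pos.1 (by omega)
    obtain ⟨i₀, hi₀, hmin⟩ := Finset.exists_min_image s (fun i => |x i|) hne
    have hd : |x i₀| ≤ decr x n := le_decr_of_many hx hn (fun i hi => hmin i hi)
    have hcard : (s.erase i₀).card = n := by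
      rw [Finset.card_erase_of_mem hi₀, hn]
      omega
    have := ih (s.erase i₀) hcard
    rw [← Finset.add_sum_erase s _ hi₀, hn, Finset.sum_range_succ]
    rw [hcard] at this
    have h2 : x i₀ ^ 2 ≤ decr x n ^ 2 := by
      rw [← sq_abs (x i₀)]
      exact pow_le_pow_left₀ (abs_nonneg _) hd 2
    linarith
namespace SeqSpace

variable (E : SeqSpace)

lemma nrm_zero : E.nrm 0 = 0 := by
  have h := E.nrm_smul 0 0 E.zero_mem
  simpa using h

lemma mem_e (n : ℕ) : E.mem (e n) := by
  obtain ⟨y, hy, hyn⟩ := E.exists_full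
  have h1 : E.mem (y n • e n) := by
    refine (E.ideal _ y hy fun i => ?_).1
    simp only [Pi.smul_apply, smul_eq_mul, e]
    by_cases hi : i = n
    · subst hi; simp
    · simp [hi, abs_nonneg]
  have h2 := E.smul_mem (y n)⁻¹ h1
  rwa [smul_smul, inv_mul_cancel₀ (hyn n), one_smul] at h2

lemma decr_e (n : ℕ) : decr (e n) = e 0 := by
  have hb : MemLinf (e n) := ⟨1, fun i => by simp only [e]; split <;> simp⟩
  have h1 : ∀ i, |e n i| = |e 0 (Equiv.swap 0 n i)| := by
    intro i
    simp only [e, Equiv.swap_apply_def]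
    rcases eq_or_ne i n with rfl | hin
    · simp
    · rcases eq_or_ne i 0 with rfl | hi0
      · simp [Ne.symm hin, hin]
      · simp [hin, hi0, Ne.symm hin]
  have h2 : ∀ i, |e 0 i| = |e n (Equiv.swap 0 n i)| := by
    intro i
    rw [h1 (Equiv.swap 0 n i), Equiv.swap_apply_self]
  have hb0 : MemLinf (e 0) := ⟨1, fun i => by simp only [e]; split <;> simp⟩
  have hle : ∀ k, decr (e n) k ≤ decr (e 0) k :=
    fun k => decr_le_of_inj hb0 _ (Equiv.swap 0 n).injective (fun i => (h1 i).le) k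
  have hge : ∀ k, decr (e 0) k ≤ decr (e n) k :=
    fun k => decr_le_of_inj hb _ (Equiv.swap 0 n).injective (fun i => (h2 i).le) k
  have : decr (e n) = decr (e 0) := funext fun k => le_antisymm (hle k) (hge k)
  rw [this, decr_eq_self]
  · intro a b hab
    simp only [e]
    rcases Nat.eq_zero_or_pos a with rfl | ha
    · split <;> simp
    · have : a ≠ 0 := by omega
      have : b ≠ 0 := by omega
      simp_all
  · intro k; simp only [e]; split <;> simp

variable {E}

lemma nrm_e_eq (hsym : E.IsSymmetric) (n : ℕ) : E.nrm (e n) = E.nrm (e 0) := by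
  have := (hsym (e n) (E.mem_e n)).2
  rw [decr_e] at this
  exact this.symm

lemma nrm_e0_pos : 0 < E.nrm (e 0) := by
  rcases lt_or_eq_of_le (E.nrm_nonneg (e 0)) with h | h
  · exact h
  · exfalso
    have := E.nrm_eq_zero (e 0) (E.mem_e 0) h.symm
    have h0 : e 0 0 = 0 := by rw [this]; rfl
    simp [e] at h0

lemma memLinf_of_mem (hsym : E.IsSymmetric) {x : ℕ → ℝ} (hx : E.mem x) : MemLinf x := by
  by_contra hc
  have hempty : ∀ n, decrSet x n = ∅ := by
    intro n
    rcases Set.eq_empty_or_nonempty (decrSet x n) with h | h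
    · exact h
    · exact absurd (memLinf_of_decrSet_nonempty h) hc
  have hdecr : decr x = 0 := by
    funext n
    rw [decr_eq_sInf, hempty n, Real.sInf_empty]; rfl
  have h0 := (hsym x hx).2
  rw [hdecr, E.nrm_zero] at h0
  have := E.nrm_eq_zero x hx h0.symm
  exact hc ⟨0, fun n => by rw [this]; simp⟩

lemma abs_le_nrm (hsym : E.IsSymmetric) {x : ℕ → ℝ} (hx : E.mem x) (n : ℕ) :
    |x n| * E.nrm (e 0) ≤ E.nrm x := by
  have h1 : E.nrm (x n • e n) ≤ E.nrm x := by
    refine (E.ideal _ x hx fun i => ?_).2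
    simp only [Pi.smul_apply, smul_eq_mul, e]
    by_cases hi : i = n
    · subst hi; simp
    · simp [hi, abs_nonneg]
  rw [E.nrm_smul _ _ (E.mem_e n), nrm_e_eq hsym n] at h1
  exact h1

lemma linfNorm_le_nrm (hsym : E.IsSymmetric) {x : ℕ → ℝ} (hx : E.mem x) :
    linfNorm x * E.nrm (e 0) ≤ E.nrm x := by
  rw [linfNorm, ← le_div_iff₀ nrm_e0_pos]
  refine Real.iSup_le (fun n => ?_) ?_
  · rw [le_div_iff₀ nrm_e0_pos]
    exact abs_le_nrm hsym hx n
  · exact div_nonneg (E.nrm_nonneg x) (E.nrm_nonneg (e 0))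

lemma mem_of_support {z : ℕ → ℝ} (s : Finset ℕ) (h : ∀ n ∉ s, z n = 0) : E.mem z := by
  induction s using Finset.induction generalizing z with
  | empty =>
    have : z = 0 := funext fun n => h n (Finset.notMem_empty n)
    rw [this]; exact E.zero_mem
  | @insert a s ha ih =>
    have h1 : E.mem (z a • e a) := E.smul_mem _ (E.mem_e a)
    have h2 : E.mem (fun n => if n = a then 0 else z n) := by
      refine ih (fun n hn => ?_)
      by_cases hna : n = a
      · simp [hna]
      · simp only [hna, if_false]
        exact h n (by simp [hna, hn])
    have h3 := E.add_mem h1 h2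
    have hz : z = (z a • e a) + (fun n => if n = a then 0 else z n) := by
      funext n
      simp only [Pi.add_apply, Pi.smul_apply, smul_eq_mul, e]
      by_cases hna : n = a
      · subst hna; simp
      · simp [hna]
    rw [hz]; exact h3

lemma sqrt_sum_sq_le_sum {ι : Type*} (s : Finset ι) (f : ι → ℝ) :
    Real.sqrt (∑ i ∈ s, f i ^ 2) ≤ ∑ i ∈ s, |f i| := by
  have h : ∑ i ∈ s, f i ^ 2 ≤ (∑ i ∈ s, |f i|) ^ 2 := by
    induction s using Finset.cons_induction with
    | empty => simp
    | cons a s ha ih =>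
      rw [Finset.sum_cons, Finset.sum_cons]
      have h1 : 0 ≤ ∑ i ∈ s, |f i| := Finset.sum_nonneg fun i _ => abs_nonneg _
      nlinarith [sq_abs (f a), abs_nonneg (f a)]
  have h1 : (0:ℝ) ≤ ∑ i ∈ s, |f i| := Finset.sum_nonneg fun i _ => abs_nonneg _
  calc Real.sqrt (∑ i ∈ s, f i ^ 2) ≤ Real.sqrt ((∑ i ∈ s, |f i|) ^ 2) := Real.sqrt_le_sqrt h
  _ = ∑ i ∈ s, |f i| := Real.sqrt_sq h1

end SeqSpace
/-- Hardy–Littlewood–Pólya type lemma (auxiliary induction). -/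
lemma hlp_aux (m : ℕ) : ∀ (d : ℕ) (α β : ℕ → ℝ),
    {i | i < m ∧ β i ≠ α i}.ncard ≤ d →
    (∀ i, 0 ≤ α i) → (∀ i, 0 ≤ β i) → Antitone α → Antitone β →
    (∀ i, m ≤ i → α i = 0) → (∀ i, m ≤ i → β i = 0) →
    (∀ K, ∑ i ∈ Finset.range K, β i ≤ ∑ i ∈ Finset.range K, α i) →
    ∃ (M : ℕ) (lam : Fin M → ℝ) (σ : Fin M → Equiv.Perm ℕ),
      (∀ j, 0 ≤ lam j) ∧ (∑ j, lam j = 1) ∧ ∀ i, β i ≤ ∑ j, lam j * α (σ j i) := by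
  have heasy : ∀ (α β : ℕ → ℝ), (∀ i, β i ≤ α i) →
      ∃ (M : ℕ) (lam : Fin M → ℝ) (σ : Fin M → Equiv.Perm ℕ),
      (∀ j, 0 ≤ lam j) ∧ (∑ j, lam j = 1) ∧ ∀ i, β i ≤ ∑ j, lam j * α (σ j i) := by
    intro α β hle
    exact ⟨1, fun _ => 1, fun _ => 1, fun j => zero_le_one, by simp,
      fun i => by simpa using hle i⟩
  intro d
  induction d with
  | zero =>
    intro α β hcard hα0 hβ0 hαa hβa hαs hβs hmaj
    by_cases hle : ∀ i, β i ≤ α i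
    · exact heasy α β hle
    · exfalso
      push_neg at hle
      obtain ⟨k, hk⟩ := hle
      have hkm : k < m := by
        by_contra hc
        exact absurd (le_of_eq (hβs k (not_lt.mp hc))) (not_le.2 (lt_of_le_of_lt (hα0 k) hk))
      have : k ∈ {i | i < m ∧ β i ≠ α i} := ⟨hkm, ne_of_gt hk⟩
      have hfin : {i | i < m ∧ β i ≠ α i}.Finite :=
        Set.Finite.subset (Set.finite_Iio m) (fun i hi => hi.1)
      have := Set.ncard_pos hfin |>.2 ⟨k, this⟩
      omega
  | succ d ih =>
    intro α β hcard hα0 hβ0 hαa hβa hαs hβs hmaj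
    by_cases hle : ∀ i, β i ≤ α i
    · exact heasy α β hle
    push_neg at hle
    classical
    have hfin : {i | i < m ∧ β i ≠ α i}.Finite :=
      Set.Finite.subset (Set.finite_Iio m) (fun i hi => hi.1)
    -- the smallest index where β exceeds α
    let k := Nat.find hle
    have hk : α k < β k := Nat.find_spec hle
    have hkmin : ∀ l, l < k → β l ≤ α l := fun l hl => not_lt.1 (Nat.find_min hle hl)
    have hkm : k < m := by
      by_contra hc
      exact absurd (le_of_eq (hβs k (not_lt.mp hc))) (not_le.2 (lt_of_le_of_lt (hα0 k) hk))
    -- there is an index j < k with β j < α j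
    have hjex : ∃ j, j < k ∧ β j < α j := by
      by_contra hcon
      push_neg at hcon
      have hlt : ∑ i ∈ Finset.range (k+1), α i < ∑ i ∈ Finset.range (k+1), β i := by
        refine Finset.sum_lt_sum (fun i hi => ?_) ⟨k, Finset.self_mem_range_succ k, hk⟩
        rcases Nat.lt_succ_iff_lt_or_eq.mp (Finset.mem_range.mp hi) with h | h
        · exact hcon i h
        · subst h; exact hk.le
      exact absurd (hmaj (k+1)) (not_le.2 hlt)
    obtain ⟨j₁, hj₁k, hj₁⟩ := hjex
    let Q : ℕ → Prop := fun l => l < k ∧ β l < α l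
    let j := Nat.findGreatest Q k
    have hQj : Q j := Nat.findGreatest_spec (le_of_lt hj₁k) ⟨hj₁k, hj₁⟩
    have hjk : j < k := hQj.1
    have hβαj : β j < α j := hQj.2
    have hmid : ∀ l, j < l → l < k → β l = α l := by
      intro l hjl hlk
      have h1 : ¬ Q l := Nat.findGreatest_is_greatest hjl hlk.le
      have h2 : ¬ (β l < α l) := fun hc => h1 ⟨hlk, hc⟩
      exact le_antisymm (hkmin l hlk) (not_lt.1 h2)
    have hβjk : β k ≤ β j := hβa hjk.le
    have hαjk : α k < α j := lt_of_lt_of_le hk (le_trans hβjk hβαj.le)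
    set δ := min (α j - β j) (β k - α k) with hδdef
    have hδa : δ ≤ α j - β j := min_le_left _ _
    have hδb : δ ≤ β k - α k := min_le_right _ _
    have hδpos : 0 < δ := lt_min (by linarith) (by linarith)
    set θ := δ / (α j - α k) with hθdef
    have hsubpos : 0 < α j - α k := sub_pos.2 hαjk
    have hθpos : 0 < θ := div_pos hδpos hsubpos
    have hθle1 : θ ≤ 1 := by
      rw [div_le_one hsubpos]; linarith
    have hθδ : θ * (α j - α k) = δ := div_mul_cancel₀ _ (ne_of_gt hsubpos)
    set τ := Equiv.swap j k with hτdef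
    set α' : ℕ → ℝ := fun i => (1-θ) * α i + θ * α (τ i) with hα'def
    have hjnek : j ≠ k := ne_of_lt hjk
    have hα'j : α' j = α j - δ := by
      simp only [hα'def, hτdef, Equiv.swap_apply_left]
      linarith [hθδ]
    have hα'k : α' k = α k + δ := by
      simp only [hα'def, hτdef, Equiv.swap_apply_right]
      linarith [hθδ]
    have hα'other : ∀ i, i ≠ j → i ≠ k → α' i = α i := by
      intro i h1 h2
      simp only [hα'def, hτdef, Equiv.swap_apply_of_ne_of_ne h1 h2]
      ring
    have hα'0 : ∀ i, 0 ≤ α' i := fun i =>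
      add_nonneg (mul_nonneg (by linarith) (hα0 i)) (mul_nonneg hθpos.le (hα0 (τ i)))
    have hα's : ∀ i, m ≤ i → α' i = 0 := by
      intro i hi
      rw [hα'other i (by omega) (by omega)]
      exact hαs i hi
    -- the chain of key inequalities
    have hchain1 : α k + δ ≤ β k := by linarith
    have hchain2 : β j ≤ α j - δ := by linarith
    have hαjk' : α k + δ ≤ α j - δ := by linarith
    have hα'a : Antitone α' := by
      intro p q hpq
      rcases eq_or_lt_of_le hpq with rfl | hpq
      · exact le_refl _
      show α' q ≤ α' p
      rcases eq_or_ne p j with rfl | hpj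
      · rw [hα'j]
        rcases eq_or_ne q k with rfl | hqk
        · rw [hα'k]; exact hαjk'
        · rw [hα'other q (by omega) hqk]
          rcases lt_or_ge q k with hq | hq
          · rw [hmid q hpq hq |>.symm]
            exact le_trans (hβa hpq.le) hchain2
          · have : α q ≤ α k := hαa (lt_of_le_of_ne hq (Ne.symm hqk)).le
            linarith
      rcases eq_or_ne p k with rfl | hpk
      · rw [hα'k]
        have hqj : q ≠ j := by omega
        have hqk : q ≠ k := by omega
        rw [hα'other q hqj hqk]
        have : α q ≤ α k := hαa hpq.le
        linarith
      rw [hα'other p hpj hpk]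
      rcases eq_or_ne q j with rfl | hqj
      · rw [hα'j]
        have : α j ≤ α p := hαa hpq.le
        linarith
      rcases eq_or_ne q k with rfl | hqk
      · rw [hα'k]
        rcases lt_or_ge p j with hp | hp
        · have : α j ≤ α p := hαa hp.le
          linarith
        · have hjp : j < p := lt_of_le_of_ne hp (Ne.symm hpj)
          rw [← hmid p hjp hpq]
          linarith [hβa hpq.le, hchain1]
      · rw [hα'other q hqj hqk]
        exact hαa hpq.le
    -- partial sums of α'
    have hfun : ∀ i, α' i = α i + ((if i = j then -δ else 0) + (if i = k then δ else 0)) := by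
      intro i
      rcases eq_or_ne i j with rfl | h1
      · rw [hα'j, if_pos rfl, if_neg hjnek]; ring
      rcases eq_or_ne i k with rfl | h2
      · rw [hα'k, if_neg h1, if_pos rfl]; ring
      · rw [hα'other i h1 h2, if_neg h1, if_neg h2]; ring
    have hsum' : ∀ K, ∑ i ∈ Finset.range K, α' i = (∑ i ∈ Finset.range K, α i) +
        ((if j ∈ Finset.range K then -δ else 0) + (if k ∈ Finset.range K then δ else 0)) := by
      intro K
      rw [Finset.sum_congr rfl (fun i _ => hfun i), Finset.sum_add_distrib,
        Finset.sum_add_distrib, Finset.sum_ite_eq' (Finset.range K) j (fun _ => -δ),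
        Finset.sum_ite_eq' (Finset.range K) k (fun _ => δ)]
    have hmaj' : ∀ K, ∑ i ∈ Finset.range K, β i ≤ ∑ i ∈ Finset.range K, α' i := by
      intro K
      rw [hsum' K]
      simp only [Finset.mem_range]
      rcases le_or_gt K j with hK | hK
      · rw [if_neg (by omega), if_neg (by omega)]
        simpa using hmaj K
      rcases le_or_gt K k with hK2 | hK2
      · rw [if_pos hK, if_neg (by omega)]
        -- need: ∑_{i<K} β ≤ ∑_{i<K} α - δ
        have hsplit : ∑ i ∈ Finset.range K, (α i - β i) =
            (∑ i ∈ Finset.range (j+1), (α i - β i)) +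
            ∑ i ∈ Finset.Ico (j+1) K, (α i - β i) := by
          simp only [Finset.range_eq_Ico]
          exact (Finset.sum_Ico_consecutive _ (Nat.zero_le _) (by omega)).symm
        have hmidzero : ∑ i ∈ Finset.Ico (j+1) K, (α i - β i) = 0 := by
          refine Finset.sum_eq_zero fun i hi => ?_
          obtain ⟨h1, h2⟩ := Finset.mem_Ico.mp hi
          rw [hmid i (by omega) (by omega)]; ring
        have hfirst : δ ≤ ∑ i ∈ Finset.range (j+1), (α i - β i) := by
          rw [Finset.sum_range_succ, Finset.sum_sub_distrib]
          have := hmaj j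
          linarith
        have htot : δ ≤ ∑ i ∈ Finset.range K, (α i - β i) := by
          rw [hsplit, hmidzero, add_zero]; exact hfirst
        rw [Finset.sum_sub_distrib] at htot
        linarith
      · rw [if_pos (by omega), if_pos hK2]
        simpa using hmaj K
    -- the disagreement set shrinks
    have hsub : {i | i < m ∧ β i ≠ α' i} ⊆ {i | i < m ∧ β i ≠ α i} := by
      rintro i ⟨him, hne⟩
      refine ⟨him, fun hc => ?_⟩
      have h1 : i ≠ j := fun h => by rw [h] at hc; exact absurd hc (ne_of_lt hβαj)
      have h2 : i ≠ k := fun h => by rw [h] at hc; exact absurd hc (ne_of_gt hk)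
      exact hne (hc.trans (hα'other i h1 h2).symm)
    have hstrict : ∃ i ∈ {i | i < m ∧ β i ≠ α i}, i ∉ {i | i < m ∧ β i ≠ α' i} := by
      rcases le_or_gt (α j - β j) (β k - α k) with hc | hc
      · refine ⟨j, ⟨by omega, ne_of_lt hβαj⟩, fun hmem => ?_⟩
        have hδeq : δ = α j - β j := min_eq_left hc
        exact hmem.2 (by rw [hα'j, hδeq]; ring)
      · refine ⟨k, ⟨hkm, ne_of_gt hk⟩, fun hmem => ?_⟩
        have hδeq : δ = β k - α k := min_eq_right hc.le
        exact hmem.2 (by rw [hα'k, hδeq]; ring)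
    have hcard' : {i | i < m ∧ β i ≠ α' i}.ncard ≤ d := by
      obtain ⟨i₀, hi₀old, hi₀new⟩ := hstrict
      have hssub : {i | i < m ∧ β i ≠ α' i} ⊂ {i | i < m ∧ β i ≠ α i} :=
        ⟨hsub, fun hback => hi₀new (hback hi₀old)⟩
      have := Set.ncard_lt_ncard hssub hfin
      omega
    obtain ⟨M, lam, σ, hlam0, hlam1, hdom⟩ :=
      ih α' β hcard' hα'0 hβ0 hα'a hβa hα's hβs hmaj'
    refine ⟨M + M, Fin.append (fun j' => (1-θ) * lam j') (fun j' => θ * lam j'),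
      Fin.append σ (fun j' => (σ j').trans τ), ?_, ?_, ?_⟩
    · intro j'
      induction j' using Fin.addCases with
      | left i => rw [Fin.append_left]; exact mul_nonneg (by linarith) (hlam0 i)
      | right i => rw [Fin.append_right]; exact mul_nonneg hθpos.le (hlam0 i)
    · rw [Fin.sum_univ_add]
      simp only [Fin.append_left, Fin.append_right]
      rw [← Finset.mul_sum, ← Finset.mul_sum, hlam1]
      ring
    · intro i
      refine le_trans (hdom i) ?_
      rw [Fin.sum_univ_add]
      simp only [Fin.append_left, Fin.append_right, Equiv.trans_apply]
      rw [← Finset.sum_add_distrib]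
      refine le_of_eq (Finset.sum_congr rfl fun j' _ => ?_)
      simp only [hα'def]
      ring
lemma lpNorm2_sq (q : ℕ → ℝ) : lpNorm 2 q ^ 2 = ∑' n, |q n| ^ (2:ℝ) := by
  have ht : 0 ≤ ∑' n, |q n| ^ (2:ℝ) :=
    tsum_nonneg fun n => Real.rpow_nonneg (abs_nonneg _) _
  rw [lpNorm]
  rw [← Real.rpow_natCast ((∑' n, |q n| ^ (2:ℝ)) ^ ((1:ℝ)/2)) 2, ← Real.rpow_mul ht]
  norm_num

lemma lpNorm_nonneg_s7 (p : ℝ) (q : ℕ → ℝ) : 0 ≤ lpNorm p q :=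
  Real.rpow_nonneg (tsum_nonneg fun n => Real.rpow_nonneg (abs_nonneg _) _) _

lemma linfNorm_nonneg (q : ℕ → ℝ) : 0 ≤ linfNorm q :=
  Real.iSup_nonneg fun n => abs_nonneg _

/-- The key technical lemma: if the partial sums of the squared decreasing
rearrangement of a bounded sequence `g` are dominated by `A` times those of `x ∈ E`,
then `g ∈ E` with norm at most `C √A ‖x‖`. -/
lemma key (E : SeqSpace) (hmax : E.IsMaximal) (hsym : E.IsSymmetric)
    (C : ℝ) (hCpos : 0 < C)
    (hCineq : ∀ (M : ℕ) (w : Fin M → ℕ → ℝ), (∀ i, E.mem (w i)) →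
      E.nrm (fun n => (∑ i, (w i n) ^ 2) ^ ((1 : ℝ) / 2)) ≤
        C * (∑ i, E.nrm (w i) ^ 2) ^ ((1 : ℝ) / 2))
    (A : ℝ) (hA : 0 ≤ A) (g x : ℕ → ℝ) (hg : MemLinf g) (hx : E.mem x)
    (hmaj : ∀ m : ℕ, ∑ k ∈ Finset.range m, decr g k ^ 2 ≤
      A * ∑ k ∈ Finset.range m, decr x k ^ 2) :
    E.mem g ∧ E.nrm g ≤ C * Real.sqrt A * E.nrm x := by
  classical
  set u := decr x with hu
  have hxb : MemLinf x := SeqSpace.memLinf_of_mem hsym hx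
  have hu_mem : E.mem u := (hsym x hx).1
  have hu_nrm : E.nrm u = E.nrm x := (hsym x hx).2
  have hu_anti : Antitone u := decr_antitone hxb
  have hu0 : ∀ n, 0 ≤ u n := decr_nonneg x
  -- truncations of g
  set tr : ℕ → (ℕ → ℝ) := fun m n => if n < m then g n else 0 with htr
  have htr_mem : ∀ m, E.mem (tr m) := fun m =>
    SeqSpace.mem_of_support (Finset.range m)
      (fun n hn => by simp only [htr]; rw [if_neg (by simpa using hn)])
  have htr_linf : ∀ m, MemLinf (tr m) := by
    intro m
    obtain ⟨Cg, hCg⟩ := hg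
    refine ⟨max Cg 0, fun n => ?_⟩
    simp only [htr]
    split
    · exact le_trans (hCg n) (le_max_left _ _)
    · simp [le_max_right]
  have main : ∀ m, E.nrm (tr m) ≤ C * Real.sqrt A * E.nrm x := by
    intro m
    set b := decr (tr m) with hb
    have hb0 : ∀ n, 0 ≤ b n := decr_nonneg _
    have hb_anti : Antitone b := decr_antitone (htr_linf m)
    have hb_supp : ∀ n, m ≤ n → b n = 0 := by
      intro n hn
      refine decr_zero_of_support (s := Finset.range m)
        (fun i hi => by simp only [htr]; rw [if_neg (by simpa using hi)])
        (by simpa using hn)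
    have hble : ∀ k, b k ≤ decr g k := by
      intro k
      refine decr_mono_pw hg (fun i => ?_) k
      simp only [htr]
      split
      · exact le_refl _
      · simp
    -- set up the majorization data
    set α : ℕ → ℝ := fun i => if i < m then A * u i ^ 2 else 0 with hα
    set β : ℕ → ℝ := fun i => b i ^ 2 with hβ
    have hα0 : ∀ i, 0 ≤ α i := by
      intro i; simp only [hα]; split
      · exact mul_nonneg hA (sq_nonneg _)
      · exact le_refl _
    have hβ0 : ∀ i, 0 ≤ β i := fun i => sq_nonneg _
    have hαa : Antitone α := by
      intro p q hpq
      simp only [hα]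
      split
      · rename_i hq
        rw [if_pos (lt_of_le_of_lt hpq hq)]
        refine mul_le_mul_of_nonneg_left ?_ hA
        exact pow_le_pow_left₀ (hu0 q) (hu_anti hpq) 2
      · split
        · exact mul_nonneg hA (sq_nonneg _)
        · exact le_refl _
    have hβa : Antitone β := fun p q hpq =>
      pow_le_pow_left₀ (hb0 q) (hb_anti hpq) 2
    have hαs : ∀ i, m ≤ i → α i = 0 := fun i hi => by
      simp only [hα]; rw [if_neg (by omega)]
    have hβs : ∀ i, m ≤ i → β i = 0 := fun i hi => by
      simp only [hβ, hb_supp i hi]; ring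
    have hrange_α : ∀ K, K ≤ m →
        ∑ i ∈ Finset.range K, α i = A * ∑ i ∈ Finset.range K, u i ^ 2 := by
      intro K hK
      rw [Finset.mul_sum]
      refine Finset.sum_congr rfl fun i hi => ?_
      simp only [hα]
      rw [if_pos (lt_of_lt_of_le (Finset.mem_range.mp hi) hK)]
    have hmaj' : ∀ K, ∑ i ∈ Finset.range K, β i ≤ ∑ i ∈ Finset.range K, α i := by
      have hcase : ∀ K, K ≤ m → ∑ i ∈ Finset.range K, β i ≤ ∑ i ∈ Finset.range K, α i := by
        intro K hK
        rw [hrange_α K hK]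
        exact le_trans
          (Finset.sum_le_sum fun i _ => pow_le_pow_left₀ (hb0 i) (hble i) 2) (hmaj K)
      intro K
      rcases le_or_gt K m with hK | hK
      · exact hcase K hK
      · have h1 : ∑ i ∈ Finset.range K, β i = ∑ i ∈ Finset.range m, β i := by
          refine (Finset.sum_subset (Finset.range_subset_range.2 hK.le) fun i _ hi => ?_).symm
          exact hβs i (by simpa using hi)
        have h2 : ∑ i ∈ Finset.range K, α i = ∑ i ∈ Finset.range m, α i := by
          refine (Finset.sum_subset (Finset.range_subset_range.2 hK.le) fun i _ hi => ?_).symm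
          exact hαs i (by simpa using hi)
        rw [h1, h2]
        exact hcase m (le_refl m)
    obtain ⟨M, lam, σ, hlam0, hlam1, hdom⟩ :=
      hlp_aux m ({i | i < m ∧ β i ≠ α i}.ncard) α β (le_refl _)
        hα0 hβ0 hαa hβa hαs hβs hmaj'
    -- the vectors of the 2-convex combination
    set w : Fin M → ℕ → ℝ := fun j n => Real.sqrt (lam j * α (σ j n)) with hw
    have hw0 : ∀ j n, 0 ≤ w j n := fun j n => Real.sqrt_nonneg _
    have hw_mem : ∀ j, E.mem (w j) := by
      intro j
      refine SeqSpace.mem_of_support ((Finset.range m).image (σ j).symm) (fun n hn => ?_)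
      have : ¬ (σ j n < m) := by
        intro hc
        refine hn (Finset.mem_image.2 ⟨σ j n, by simpa using hc, ?_⟩)
        simp
      simp only [hw, hα]
      rw [if_neg this, mul_zero, Real.sqrt_zero]
    have hα_le : ∀ s, α s ≤ A * u s ^ 2 := by
      intro s
      simp only [hα]; split
      · exact le_refl _
      · exact mul_nonneg hA (sq_nonneg _)
    have hw_nrm : ∀ j, E.nrm (w j) ≤ Real.sqrt (lam j * A) * E.nrm x := by
      intro j
      set c := Real.sqrt (lam j * A) with hc
      have hc0 : 0 ≤ c := Real.sqrt_nonneg _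
      have hW_mem : E.mem (c • u) := E.smul_mem c hu_mem
      have hW_anti : Antitone (c • u) := fun p q hpq => by
        simp only [Pi.smul_apply, smul_eq_mul]
        exact mul_le_mul_of_nonneg_left (hu_anti hpq) hc0
      have hW0 : ∀ n, 0 ≤ (c • u) n := fun n => mul_nonneg hc0 (hu0 n)
      have hW_bdd : MemLinf (c • u) := ⟨c * u 0, fun n => by
        rw [abs_of_nonneg (hW0 n)]
        exact mul_le_mul_of_nonneg_left (hu_anti (Nat.zero_le n)) hc0⟩
      have hwW : ∀ i, |w j i| ≤ |(c • u) (σ j i)| := by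
        intro i
        rw [abs_of_nonneg (hw0 j i), abs_of_nonneg (hW0 (σ j i))]
        simp only [hw, Pi.smul_apply, smul_eq_mul, hc]
        calc Real.sqrt (lam j * α (σ j i)) ≤ Real.sqrt (lam j * (A * u (σ j i) ^ 2)) :=
          Real.sqrt_le_sqrt (mul_le_mul_of_nonneg_left (hα_le _) (hlam0 j))
        _ = Real.sqrt (lam j * A) * u (σ j i) := by
          rw [show lam j * (A * u (σ j i) ^ 2) = (lam j * A) * u (σ j i) ^ 2 by ring,
            Real.sqrt_mul (mul_nonneg (hlam0 j) hA), Real.sqrt_sq (hu0 _)]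
      have hd1 : ∀ n, decr (w j) n ≤ (c • u) n := by
        intro n
        have := decr_le_of_inj hW_bdd (σ j) (σ j).injective hwW n
        rwa [decr_eq_self hW_anti hW0] at this
      have h1 : E.nrm (w j) = E.nrm (decr (w j)) := ((hsym (w j) (hw_mem j)).2).symm
      have h2 : E.nrm (decr (w j)) ≤ E.nrm (c • u) := by
        refine (E.ideal _ _ hW_mem fun n => ?_).2
        rw [abs_of_nonneg (decr_nonneg _ n), abs_of_nonneg (hW0 n)]
        exact hd1 n
      rw [h1]
      refine le_trans h2 ?_
      rw [E.nrm_smul c u hu_mem, abs_of_nonneg hc0, hu_nrm]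
    -- the dominator
    set D : ℕ → ℝ := fun n => (∑ j, (w j n) ^ 2) ^ ((1:ℝ)/2) with hD
    have hDsqrt : ∀ n, D n = Real.sqrt (∑ j, (w j n) ^ 2) := fun n =>
      (Real.sqrt_eq_rpow _).symm
    have hD0 : ∀ n, 0 ≤ D n := fun n => by
      rw [hDsqrt]; exact Real.sqrt_nonneg _
    have hmemabs : ∀ j : Fin M, E.mem (fun n => |w j n|) := by
      intro j
      exact (E.ideal _ (w j) (hw_mem j) fun n => by rw [abs_abs]).1
    have hmemsum : ∀ s : Finset (Fin M), E.mem (fun n => ∑ j ∈ s, |w j n|) := by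
      intro s
      induction s using Finset.cons_induction with
      | empty => simp only [Finset.sum_empty]; exact E.zero_mem
      | cons a s ha ih =>
        have heq : (fun n => ∑ j ∈ Finset.cons a s ha, |w j n|) =
            ((fun n => |w a n|) + fun n => ∑ j ∈ s, |w j n|) := by
          funext n
          simp [Finset.sum_insert ha]
        rw [heq]
        exact E.add_mem (hmemabs a) ih
    have hD_mem : E.mem D := by
      refine (E.ideal D (fun n => ∑ j, |w j n|) (hmemsum Finset.univ) fun n => ?_).1
      rw [abs_of_nonneg (hD0 n), abs_of_nonneg
        (Finset.sum_nonneg fun j _ => abs_nonneg _), hDsqrt]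
      exact SeqSpace.sqrt_sum_sq_le_sum Finset.univ _
    have hD_nrm : E.nrm D ≤ C * Real.sqrt A * E.nrm x := by
      refine le_trans (hCineq M w hw_mem) ?_
      have hterm : ∀ j : Fin M, E.nrm (w j) ^ 2 ≤ lam j * A * E.nrm x ^ 2 := by
        intro j
        have h1 : E.nrm (w j) ^ 2 ≤ (Real.sqrt (lam j * A) * E.nrm x) ^ 2 :=
          pow_le_pow_left₀ (E.nrm_nonneg _) (hw_nrm j) 2
        refine le_trans h1 (le_of_eq ?_)
        rw [mul_pow, Real.sq_sqrt (mul_nonneg (hlam0 j) hA)]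
      have hsum_le : (∑ j, E.nrm (w j) ^ 2) ≤ A * E.nrm x ^ 2 := by
        refine le_trans (Finset.sum_le_sum fun j _ => hterm j) ?_
        have heq2 : (∑ j, lam j * A * E.nrm x ^ 2) = (∑ j, lam j) * (A * E.nrm x ^ 2) := by
          rw [Finset.sum_mul]
          exact Finset.sum_congr rfl fun j _ => by ring
        rw [heq2, hlam1, one_mul]
      have h2 : (∑ j, E.nrm (w j) ^ 2) ^ ((1:ℝ)/2) ≤ Real.sqrt A * E.nrm x := by
        rw [← Real.sqrt_eq_rpow]
        calc Real.sqrt (∑ j, E.nrm (w j) ^ 2) ≤ Real.sqrt (A * E.nrm x ^ 2) :=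
          Real.sqrt_le_sqrt hsum_le
        _ = Real.sqrt A * E.nrm x := by
          rw [Real.sqrt_mul hA, Real.sqrt_sq (E.nrm_nonneg x)]
      exact le_trans (mul_le_mul_of_nonneg_left h2 hCpos.le) (le_of_eq (by ring))
    have hbD : ∀ n, b n ≤ D n := by
      intro n
      rw [hDsqrt]
      have h1 : b n = Real.sqrt (β n) := by
        simp only [hβ]; rw [Real.sqrt_sq (hb0 n)]
      have h2 : (∑ j, (w j n) ^ 2) = ∑ j, lam j * α (σ j n) := by
        refine Finset.sum_congr rfl fun j _ => ?_
        simp only [hw]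
        rw [Real.sq_sqrt (mul_nonneg (hlam0 j) (hα0 _))]
      rw [h1, h2]
      exact Real.sqrt_le_sqrt (hdom n)
    have hb_nrm : E.nrm b ≤ E.nrm D := by
      refine (E.ideal b D hD_mem fun n => ?_).2
      rw [abs_of_nonneg (hb0 n), abs_of_nonneg (hD0 n)]
      exact hbD n
    have htrb : E.nrm (tr m) = E.nrm b := ((hsym (tr m) (htr_mem m)).2).symm
    rw [htrb]
    exact le_trans hb_nrm hD_nrm
  -- pass to the limit using maximality
  set Dv := C * Real.sqrt A * E.nrm x with hDv
  have hDv0 : 0 ≤ Dv :=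
    mul_nonneg (mul_nonneg hCpos.le (Real.sqrt_nonneg A)) (E.nrm_nonneg x)
  rcases eq_or_lt_of_le hDv0 with hDvz | hDvpos
  · -- degenerate case : all truncations are zero
    have hg0 : ∀ n, g n = 0 := by
      intro n
      have h1 : E.nrm (tr (n+1)) = 0 :=
        le_antisymm (le_of_le_of_eq (main (n+1)) hDvz.symm) (E.nrm_nonneg _)
      have h2 := E.nrm_eq_zero _ (htr_mem (n+1)) h1
      have h3 := congrFun h2 n
      simp only [htr] at h3
      rwa [if_pos (Nat.lt_succ_self n)] at h3
    have hgeq : g = 0 := funext hg0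
    rw [hgeq]
    exact ⟨E.zero_mem, by rw [E.nrm_zero]; exact hDv0⟩
  · set f : ℕ → (ℕ → ℝ) := fun k => Dv⁻¹ • tr k with hf
    have hfm : ∀ k, E.mem (f k) ∧ E.nrm (f k) ≤ 1 := by
      intro k
      refine ⟨E.smul_mem _ (htr_mem k), ?_⟩
      rw [E.nrm_smul _ _ (htr_mem k), abs_of_nonneg (inv_nonneg.2 hDv0)]
      rw [inv_mul_le_iff₀ hDvpos, mul_one]
      exact main k
    have hlim : ∀ n, Filter.Tendsto (fun k => f k n) Filter.atTop
        (nhds ((Dv⁻¹ • g) n)) := by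
      intro n
      refine tendsto_atTop_of_eventually_const (i₀ := n + 1) fun k hk => ?_
      simp only [hf, htr, Pi.smul_apply, smul_eq_mul]
      rw [if_pos (by omega)]
    obtain ⟨hmem1, hnrm1⟩ := hmax f hfm (Dv⁻¹ • g) hlim
    have hgmem : E.mem g := by
      have := E.smul_mem Dv hmem1
      rwa [smul_smul, mul_inv_cancel₀ (ne_of_gt hDvpos), one_smul] at this
    refine ⟨hgmem, ?_⟩
    have := E.nrm_smul Dv (Dv⁻¹ • g) hmem1
    rw [smul_smul, mul_inv_cancel₀ (ne_of_gt hDvpos), one_smul] at this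
    rw [this, abs_of_nonneg hDv0]
    calc Dv * E.nrm (Dv⁻¹ • g) ≤ Dv * 1 := mul_le_mul_of_nonneg_left hnrm1 hDv0
    _ = Dv := mul_one Dv

/-- every 2-convex maximal symmetric Banach sequence space is an
interpolation space with respect to `(ℓ₂, ℓ_∞)`. -/
theorem statement7 (E : SeqSpace) (hconv : E.TwoConvex) (hmax : E.IsMaximal)
    (hsym : E.IsSymmetric) :
    IsInterpSpace (Memlp 2) (lpNorm 2) MemLinf linfNorm E.mem E.nrm := by
  classical
  obtain ⟨C, hCpos, hCineq⟩ := hconv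
  -- core of part 1 : `ℓ₂ ⊆ E` with norm bound
  have part1core : ∀ x₀, Memlp 2 x₀ →
      E.mem x₀ ∧ E.nrm x₀ ≤ (C * E.nrm (e 0)) * lpNorm 2 x₀ := by
    intro x₀ hx₀
    set c := lpNorm 2 x₀ with hc
    have hc0 : 0 ≤ c := lpNorm_nonneg_s7 2 x₀
    have hspike_mem : E.mem (c • e 0) := E.smul_mem c (E.mem_e 0)
    have hanti : Antitone (c • e 0) := by
      intro p q hpq
      simp only [Pi.smul_apply, smul_eq_mul, e]
      rcases eq_or_ne q 0 with rfl | hq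
      · have hp : p = 0 := Nat.le_zero.mp hpq
        subst hp
        exact le_refl _
      · rw [if_neg hq, mul_zero]
        split
        · linarith
        · rw [mul_zero]
    have hpos : ∀ n, 0 ≤ (c • e 0) n := by
      intro n
      simp only [Pi.smul_apply, smul_eq_mul, e]
      split
      · linarith
      · rw [mul_zero]
    have hdecr_spike : decr (c • e 0) = c • e 0 := decr_eq_self hanti hpos
    have hRHS : ∀ m : ℕ, (∑ k ∈ Finset.range m, ((c • e 0) k) ^ 2) =
        if 0 ∈ Finset.range m then c ^ 2 else 0 := by
      intro m
      rw [← Finset.sum_ite_eq' (Finset.range m) 0 (fun _ => c ^ 2)]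
      refine Finset.sum_congr rfl fun k _ => ?_
      simp only [Pi.smul_apply, smul_eq_mul, e]
      rcases eq_or_ne k 0 with rfl | hk
      · simp
      · rw [if_neg hk, if_neg hk, mul_zero]
        ring
    have hcsq : c ^ 2 = ∑' n, |x₀ n| ^ (2:ℝ) := lpNorm2_sq x₀
    have hmaj : ∀ m : ℕ, ∑ k ∈ Finset.range m, decr x₀ k ^ 2 ≤
        1 * ∑ k ∈ Finset.range m, decr (c • e 0) k ^ 2 := by
      intro m
      rw [one_mul, hdecr_spike, hRHS m]
      rcases Nat.eq_zero_or_pos m with rfl | hm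
      · simp
      · rw [if_pos (Finset.mem_range.2 hm), hcsq]
        exact sum_decr_sq_le_tsum hx₀ m
    have hk := key E hmax hsym C hCpos hCineq 1 zero_le_one x₀ (c • e 0)
      (memLinf_of_memlp2 hx₀) hspike_mem hmaj
    refine ⟨hk.1, ?_⟩
    refine le_trans hk.2 (le_of_eq ?_)
    rw [Real.sqrt_one, E.nrm_smul c (e 0) (E.mem_e 0), abs_of_nonneg hc0]
    ring
  refine ⟨⟨fun x hx => (part1core x hx.1).1,
      C * E.nrm (e 0), mul_nonneg hCpos.le (E.nrm_nonneg _), fun x hx => ?_⟩,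
    ⟨fun x hx => ?_, (E.nrm (e 0))⁻¹, inv_nonneg.2 (E.nrm_nonneg _), fun x hx => ?_⟩,
    fun T hT2 hTinf => ?_⟩
  -- part 1, norm estimate
  · refine le_trans (part1core x hx.1).2 ?_
    refine mul_le_mul_of_nonneg_left ?_ (mul_nonneg hCpos.le (E.nrm_nonneg _))
    exact le_max_left _ _
  -- part 2, membership
  · have hmemlp0 : Memlp 2 (0 : ℕ → ℝ) := by
      have h : (fun n : ℕ => |(0 : ℕ → ℝ) n| ^ (2:ℝ)) = fun _ => (0:ℝ) := by
        funext n
        simp only [Pi.zero_apply, abs_zero]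
        exact Real.zero_rpow (by norm_num)
      rw [Memlp, h]
      exact summable_zero
    exact ⟨0, x, hmemlp0, SeqSpace.memLinf_of_mem hsym hx, (zero_add x).symm⟩
  -- part 2, norm estimate
  · have hmemlp0 : Memlp 2 (0 : ℕ → ℝ) := by
      have h : (fun n : ℕ => |(0 : ℕ → ℝ) n| ^ (2:ℝ)) = fun _ => (0:ℝ) := by
        funext n
        simp only [Pi.zero_apply, abs_zero]
        exact Real.zero_rpow (by norm_num)
      rw [Memlp, h]
      exact summable_zero
    have hlp0 : lpNorm 2 (0 : ℕ → ℝ) = 0 := by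
      have h : (fun n : ℕ => |(0 : ℕ → ℝ) n| ^ (2:ℝ)) = fun _ => (0:ℝ) := by
        funext n
        simp only [Pi.zero_apply, abs_zero]
        exact Real.zero_rpow (by norm_num)
      rw [lpNorm, h, tsum_zero]
      exact Real.zero_rpow (by norm_num)
    have hsle : sumNrm (Memlp 2) (lpNorm 2) MemLinf linfNorm x ≤ linfNorm x := by
      have hel : lpNorm 2 (0 : ℕ → ℝ) + 1 * linfNorm x ∈
          {c | ∃ a b, Memlp 2 a ∧ MemLinf b ∧ x = a + b ∧
            c = lpNorm 2 a + 1 * linfNorm b} :=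
        ⟨0, x, hmemlp0, SeqSpace.memLinf_of_mem hsym hx, (zero_add x).symm, rfl⟩
      have hbdd : BddBelow {c | ∃ a b, Memlp 2 a ∧ MemLinf b ∧ x = a + b ∧
          c = lpNorm 2 a + 1 * linfNorm b} := by
        refine ⟨0, ?_⟩
        rintro c ⟨a, b, _, _, _, rfl⟩
        have := lpNorm_nonneg_s7 2 a
        have := linfNorm_nonneg b
        linarith
      have := csInf_le hbdd hel
      rw [hlp0, zero_add, one_mul] at this
      exact this
    refine le_trans hsle ?_
    have h1 := SeqSpace.linfNorm_le_nrm hsym hx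
    rw [inv_mul_eq_div, ← le_div_iff₀ SeqSpace.nrm_e0_pos] at *
    exact h1
  -- part 3 : interpolation property
  · have hT2m := hT2.1
    obtain ⟨C₂, hC₂0, hC₂b⟩ := hT2.2
    have hTim := hTinf.1
    obtain ⟨Ci, hCi0, hCib⟩ := hTinf.2
    set A := 2 * C₂ ^ 2 + 2 * Ci ^ 2 with hA
    have hA0 : 0 ≤ A := by positivity
    have claim : ∀ x, E.mem x → E.mem (T x) ∧ E.nrm (T x) ≤ C * Real.sqrt A * E.nrm x := by
      intro x hx
      have hxb : MemLinf x := SeqSpace.memLinf_of_mem hsym hx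
      have hgLinf : MemLinf (T x) := hTim x hxb
      have hmaj : ∀ m : ℕ, ∑ k ∈ Finset.range m, decr (T x) k ^ 2 ≤
          A * ∑ k ∈ Finset.range m, decr x k ^ 2 := by
        intro m
        set t := decr x m with ht
        have ht0 : 0 ≤ t := decr_nonneg x m
        have hcount : ∀ s : Finset ℕ, (∀ i ∈ s, t < |x i|) → s.card ≤ m := by
          intro s hs
          by_contra hcon
          push_neg at hcon
          obtain ⟨s', hsub, hcard⟩ := Finset.exists_subset_card_eq (s := s) (n := m+1) (by omega)
          have hne : s'.Nonempty := Finset.card_pos.1 (by omega)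
          have h1 : s'.inf' hne (fun i => |x i|) ≤ decr x m :=
            le_decr_of_many hxb hcard (fun i hi => Finset.inf'_le _ hi)
          obtain ⟨i₀, hi₀, heq⟩ := Finset.exists_mem_eq_inf' hne (fun i => |x i|)
          rw [heq] at h1
          exact absurd (hs i₀ (hsub hi₀)) (not_lt.2 h1)
        have hSfin : {n | t < |x n|}.Finite := by
          by_contra hinf
          obtain ⟨s, hssub, hscard⟩ := Set.Infinite.exists_subset_card_eq hinf (m+1)
          exact absurd (hcount s (fun i hi => hssub hi)) (by omega)
        set S := hSfin.toFinset with hS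
        have hScard : S.card ≤ m :=
          hcount S (fun i hi => (Set.Finite.mem_toFinset hSfin).1 hi)
        set a : ℕ → ℝ := fun n => if t < |x n| then x n else 0 with ha
        set bf : ℕ → ℝ := fun n => if t < |x n| then 0 else x n with hbf
        have hxab : x = a + bf := by
          funext n
          simp only [ha, hbf, Pi.add_apply]
          split <;> ring
        have hTsum : T x = T a + T bf := by rw [hxab]; exact map_add T a bf
        have hTx' : T x = fun i => T a i + T bf i := by
          funext i
          rw [hTsum]
          rfl
        have hMem2a : Memlp 2 a := by
          refine summable_of_ne_finset_zero (s := S) fun n hn => ?_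
          have hna : a n = 0 := by
            simp only [ha]
            rw [if_neg (show ¬ (t < |x n|) from fun hc => hn ((Set.Finite.mem_toFinset hSfin).2 hc))]
          rw [hna, abs_zero]
          exact Real.zero_rpow (by norm_num)
        have hTa2 : Memlp 2 (T a) := hT2m a hMem2a
        have hTaLinf : MemLinf (T a) := memLinf_of_memlp2 hTa2
        have hbbound : ∀ i, |bf i| ≤ t := by
          intro i
          simp only [hbf]
          split
          · rw [abs_zero]; exact ht0
          · exact not_lt.1 (by assumption)
        have hTbbound : ∀ i, |T bf i| ≤ Ci * t := by
          have hTbLinf : MemLinf (T bf) := hTim bf ⟨t, hbbound⟩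
          have h1 : linfNorm (T bf) ≤ Ci * linfNorm bf := hCib bf ⟨t, hbbound⟩
          have h2 : linfNorm bf ≤ t := Real.iSup_le hbbound ht0
          intro i
          have hbdd : BddAbove (Set.range fun n => |T bf n|) := by
            obtain ⟨Cb, hCb⟩ := hTbLinf
            exact ⟨Cb, by rintro _ ⟨n, rfl⟩; exact hCb n⟩
          calc |T bf i| ≤ linfNorm (T bf) := le_ciSup hbdd i
          _ ≤ Ci * linfNorm bf := h1
          _ ≤ Ci * t := mul_le_mul_of_nonneg_left h2 hCi0
        have step1 : ∀ k, decr (T x) k ≤ decr (T a) k + Ci * t := by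
          intro k
          have h := decr_add_le hTaLinf hTbbound k
          rw [hTx']
          exact h
        have step2 : ∑ k ∈ Finset.range m, decr (T x) k ^ 2 ≤
            2 * (∑ k ∈ Finset.range m, decr (T a) k ^ 2) + 2 * m * (Ci * t) ^ 2 := by
          have hterm : ∀ k, decr (T x) k ^ 2 ≤ 2 * decr (T a) k ^ 2 + 2 * (Ci * t) ^ 2 := by
            intro k
            have h1 := step1 k
            have h2 : 0 ≤ decr (T x) k := decr_nonneg _ _
            nlinarith [sq_nonneg (decr (T a) k - Ci * t), sq_nonneg (decr (T a) k + Ci * t)]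
          have hs1 : (∑ k ∈ Finset.range m, decr (T x) k ^ 2) ≤
              ∑ k ∈ Finset.range m, (2 * decr (T a) k ^ 2 + 2 * (Ci * t) ^ 2) :=
            Finset.sum_le_sum fun k _ => hterm k
          have hs2 : (∑ k ∈ Finset.range m, (2 * decr (T a) k ^ 2 + 2 * (Ci * t) ^ 2)) =
              2 * (∑ k ∈ Finset.range m, decr (T a) k ^ 2) + 2 * m * (Ci * t) ^ 2 := by
            rw [Finset.sum_add_distrib, Finset.sum_const, Finset.card_range,
              ← Finset.mul_sum, nsmul_eq_mul]
            ring
          rw [← hs2]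
          exact hs1
        have step3 : (∑ k ∈ Finset.range m, decr (T a) k ^ 2) ≤
            C₂ ^ 2 * ∑ k ∈ Finset.range m, decr x k ^ 2 := by
          have h1 := sum_decr_sq_le_tsum hTa2 m
          have h2 : (∑' n, |T a n| ^ (2:ℝ)) = lpNorm 2 (T a) ^ 2 := (lpNorm2_sq _).symm
          have h3 : lpNorm 2 (T a) ^ 2 ≤ C₂ ^ 2 * lpNorm 2 a ^ 2 := by
            have := pow_le_pow_left₀ (lpNorm_nonneg_s7 2 (T a)) (hC₂b a hMem2a) 2
            rw [mul_pow] at this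
            exact this
          have h5 : lpNorm 2 a ^ 2 ≤ ∑ k ∈ Finset.range m, decr x k ^ 2 := by
            rw [lpNorm2_sq a]
            have h5a : (∑' n, |a n| ^ (2:ℝ)) = ∑ n ∈ S, |a n| ^ (2:ℝ) := by
              refine tsum_eq_sum fun n hn => ?_
              have hna : a n = 0 := by
                simp only [ha]
                rw [if_neg (show ¬ (t < |x n|) from fun hc => hn ((Set.Finite.mem_toFinset hSfin).2 hc))]
              rw [hna, abs_zero]
              exact Real.zero_rpow (by norm_num)
            have h5b : (∑ n ∈ S, |a n| ^ (2:ℝ)) = ∑ n ∈ S, x n ^ 2 := by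
              refine Finset.sum_congr rfl fun n hn => ?_
              rw [abs_sq_rpow]
              have : a n = x n := by
                simp only [ha]
                rw [if_pos (show t < |x n| from (Set.Finite.mem_toFinset hSfin).1 hn)]
              rw [this]
            rw [h5a, h5b]
            refine le_trans (sum_sq_le_sum_decr_sq hxb S) ?_
            refine Finset.sum_le_sum_of_subset_of_nonneg
              (Finset.range_subset_range.2 hScard) fun k _ _ => sq_nonneg _
          refine le_trans (le_trans (by rw [← h2]; exact h1 : (∑ k ∈ Finset.range m,
              decr (T a) k ^ 2) ≤ lpNorm 2 (T a) ^ 2) h3)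
            (mul_le_mul_of_nonneg_left h5 (sq_nonneg C₂))
        have step4 : (m : ℝ) * t ^ 2 ≤ ∑ k ∈ Finset.range m, decr x k ^ 2 := by
          have : ∀ k ∈ Finset.range m, t ^ 2 ≤ decr x k ^ 2 := by
            intro k hk
            have h1 : t ≤ decr x k := decr_antitone hxb (Finset.mem_range.mp hk).le
            exact pow_le_pow_left₀ ht0 h1 2
          have h2 := Finset.sum_le_sum this
          rw [Finset.sum_const, Finset.card_range, nsmul_eq_mul] at h2
          exact h2
        have hid : 2 * (m : ℝ) * (Ci * t) ^ 2 = 2 * Ci ^ 2 * ((m : ℝ) * t ^ 2) := by ring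
        have h8 : 2 * Ci ^ 2 * ((m : ℝ) * t ^ 2) ≤
            2 * Ci ^ 2 * ∑ k ∈ Finset.range m, decr x k ^ 2 :=
          mul_le_mul_of_nonneg_left step4 (by positivity)
        have hexp : A * (∑ k ∈ Finset.range m, decr x k ^ 2) =
            2 * C₂ ^ 2 * (∑ k ∈ Finset.range m, decr x k ^ 2) +
            2 * Ci ^ 2 * (∑ k ∈ Finset.range m, decr x k ^ 2) := by
          rw [hA]; ring
        rw [hexp]
        linarith
      exact key E hmax hsym C hCpos hCineq A hA0 (T x) x hgLinf hx hmaj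
    exact ⟨fun x hx => (claim x hx).1, C * Real.sqrt A,
      mul_nonneg hCpos.le (Real.sqrt_nonneg A), fun x hx => (claim x hx).2⟩

end Paper
end
end
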